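/- arXiv:2512.12933 — 12 statements merged into one kernel-verified Lean document; each statement's English description precedes it below -/
import Mathlib

section
/- Let G be a graph on a finite vertex set V with |V| = n ≥ 5. Then the following are equivalent: (a) for every graph H on V, if every 3-element subset of V induces a disconnected subgraph in H exactly when it induces a disconnected subgraph in G (i.e. Δ₃(H) = Δ₃(G)), then H = G; (b) G has no twins and G does not belong to the family 𝒫₄. -/
/-!
On three vertices the induced subgraph is connected iff at least two of the three possible
edges are present, so `Δ₃(G)` records which triples span at least two edges.

Toggling the edge between twins `u, v` does not change this, and neither does swapping the middle
vertices `y, z` of a `𝒫₄` configuration `x - y - z - w`. Conversely, let `H` have the same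
connected triples as `G`. If `uv` is an edge of `G` but not of `H`, then every other vertex
adjacent in `G` to `u` or `v` is adjacent in `H` to both. Applied to a vertex `a` adjacent to `u`
but not to `v`, and then to the non-edge `va` of `G` (an edge of `H`), this makes either `a, v`
twins or `v - u - a - b` a `𝒫₄` configuration. So `G ≤ H` when `G` has no twins and is not in
`𝒫₄`, and then the endpoints of an edge of `H` missing from `G` would be twins.
-/

open scoped symmDiff

namespace SimpleGraph

variable {V : Type*} (G H : SimpleGraph V) {a b c u v : V}

def TripleConnected (a b c : V) : Prop :=
  (G.Adj a b ∧ G.Adj a c) ∨ (G.Adj a b ∧ G.Adj b c) ∨ (G.Adj a c ∧ G.Adj b c)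

lemma connected_induce_of_adj_of_adj (hab : G.Adj a b) (hbc : G.Adj b c) :
    (G.induce {a, b, c}).Connected := by
  have hunion : ({a, b, c} : Set V) = {a, b} ∪ {b, c} := by
    ext; simp only [Set.mem_insert_iff, Set.mem_singleton_iff, Set.mem_union]; tauto
  rw [hunion]
  exact induce_union_connected (induce_pair_connected_of_adj hab).preconnected
    (induce_pair_connected_of_adj hbc).preconnected ⟨b, by simp⟩

lemma connected_induce_triple_iff (hab : a ≠ b) :
    (G.induce {a, b, c}).Connected ↔ G.TripleConnected a b c := by
  refine ⟨fun hconn => ?_, ?_⟩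
  · by_contra hT
    obtain ⟨p, hp, hiso⟩ : ∃ p ∈ ({a, b, c} : Set V), ∀ q ∈ ({a, b, c} : Set V), ¬G.Adj p q := by
      simp only [TripleConnected] at hT
      simp only [Set.mem_insert_iff, Set.mem_singleton_iff, exists_eq_or_imp, forall_eq_or_imp,
        forall_eq, G.irrefl, not_false_eq_true, true_and]
      grind [G.adj_comm, G.irrefl]
    have : Nontrivial ({a, b, c} : Set V) := ⟨⟨a, by simp⟩, ⟨b, by simp⟩, by simpa using hab⟩
    exact hconn.preconnected.not_isIsolated ⟨p, hp⟩ fun q => hiso q q.2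
  · rintro (⟨hab, hac⟩ | ⟨hab, hbc⟩ | ⟨hac, hbc⟩)
    · rw [Set.insert_comm]
      exact G.connected_induce_of_adj_of_adj hab.symm hac
    · exact G.connected_induce_of_adj_of_adj hab hbc
    · rw [Set.pair_comm]
      exact G.connected_induce_of_adj_of_adj hac hbc.symm

-- `Δ₃(G) = Δ₃(H)`, in the form given by `connected_induce_triple_iff`
def SameConnectedTriples : Prop :=
  ∀ a b c : V, a ≠ b → a ≠ c → b ≠ c → (H.TripleConnected a b c ↔ G.TripleConnected a b c)

lemma sameConnectedTriples_iff :
    (∀ T : Finset V, T.card = 3 →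
        (¬(H.induce (T : Set V)).Connected ↔ ¬(G.induce (T : Set V)).Connected)) ↔
      G.SameConnectedTriples H := by
  classical
  refine ⟨fun h a b c hab hac hbc => ?_, fun h T hT => ?_⟩
  · have := not_iff_not.1 (h {a, b, c} (Finset.card_eq_three.2 ⟨a, b, c, hab, hac, hbc, rfl⟩))
    rwa [Finset.coe_insert, Finset.coe_insert, Finset.coe_singleton,
      connected_induce_triple_iff _ hab, connected_induce_triple_iff _ hab] at this
  · obtain ⟨a, b, c, hab, hac, hbc, rfl⟩ := Finset.card_eq_three.1 hT
    rw [not_iff_not, Finset.coe_insert, Finset.coe_insert, Finset.coe_singleton,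
      connected_induce_triple_iff _ hab, connected_induce_triple_iff _ hab]
    exact h a b c hab hac hbc

lemma neighborSet_sdiff_eq_iff :
    G.neighborSet u \ {v} = G.neighborSet v \ {u} ↔
      ∀ c, c ≠ u → c ≠ v → (G.Adj u c ↔ G.Adj v c) := by
  simp only [Set.ext_iff, Set.mem_sdiff, mem_neighborSet, Set.mem_singleton_iff]
  refine ⟨fun h c hcu hcv => by simpa [hcu, hcv] using h c, fun h c => ?_⟩
  by_cases hcu : c = u
  · subst hcu; simp
  by_cases hcv : c = v
  · subst hcv; simp
  simpa [hcu, hcv] using h c hcu hcv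

lemma sameConnectedTriples_symmDiff_edge (htw : ∀ c, c ≠ u → c ≠ v → (G.Adj u c ↔ G.Adj v c)) :
    G.SameConnectedTriples (G ∆ edge u v) := by
  intro a b c hab hac hbc
  simp only [TripleConnected, symmDiff_def, sup_adj, sdiff_adj, edge_adj]
  grind [G.adj_comm]

lemma symmDiff_edge_ne (huv : u ≠ v) : G ∆ edge u v ≠ G := by
  intro h
  simpa [symmDiff_def, edge_adj, huv] using congrArg (fun K => K.Adj u v) h

lemma sameConnectedTriples_comap_swap [DecidableEq V] {x y z w : V} {V' : Set V}
    (hx : ∀ q, G.Adj x q ↔ q ∈ V' ∪ {y})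
    (hy : ∀ q, G.Adj y q ↔ q ∈ V' ∪ {x, z})
    (hz : ∀ q, G.Adj z q ↔ q ∈ V' ∪ {y, w})
    (hw : ∀ q, G.Adj w q ↔ q ∈ V' ∪ {z}) :
    G.SameConnectedTriples (G.comap (Equiv.swap y z)) := by
  -- the swap fixes every triple containing both or neither of `y, z`, and outside `{x, w}`
  -- the vertices `y` and `z` have the same neighbours
  intro a b c hab hac hbc
  simp only [Set.mem_union, Set.mem_insert_iff, Set.mem_singleton_iff] at hx hy hz hw
  simp only [TripleConnected, comap_adj, Equiv.swap_apply_def]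
  grind [G.adj_comm]

def HasTwins : Prop :=
  ∃ u v : V, u ≠ v ∧ G.neighborSet u \ {v} = G.neighborSet v \ {u}

def MemP4 : Prop :=
  ∃ (x y z w : V) (V' : Set V),
    x ≠ y ∧ x ≠ z ∧ x ≠ w ∧ y ≠ z ∧ y ≠ w ∧ z ≠ w ∧
    V' ⊆ ({x, y, z, w} : Set V)ᶜ ∧
    G.neighborSet x = V' ∪ {y} ∧
    G.neighborSet y = V' ∪ {x, z} ∧
    G.neighborSet z = V' ∪ {y, w} ∧
    G.neighborSet w = V' ∪ {z}

lemma memP4_of_adj {x y z w : V} (hxz : x ≠ z) (hyw : y ≠ w)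
    (hxy : G.Adj x y) (hyz : G.Adj y z) (hzw : G.Adj z w)
    (hnxz : ¬G.Adj x z) (hnxw : ¬G.Adj x w) (hnyw : ¬G.Adj y w)
    (hout : ∀ c, c ≠ x → c ≠ y → c ≠ z → c ≠ w →
      (G.Adj x c ↔ G.Adj y c) ∧ (G.Adj y c ↔ G.Adj z c) ∧ (G.Adj z c ↔ G.Adj w c)) :
    G.MemP4 := by
  have hxw : x ≠ w := fun h => hnxz (h ▸ hzw.symm)
  refine ⟨x, y, z, w, G.neighborSet x \ {y}, hxy.ne, hxz, hxw, hyz.ne, hyw, hzw.ne,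
    fun c => ?_, Set.ext fun c => ?_, Set.ext fun c => ?_, Set.ext fun c => ?_,
    Set.ext fun c => ?_⟩ <;>
  · simp only [Set.mem_sdiff, mem_neighborSet, Set.mem_singleton_iff, Set.mem_union,
      Set.mem_insert_iff, Set.mem_compl_iff]
    by_cases hc : c = x ∨ c = y ∨ c = z ∨ c = w
    · rcases hc with rfl | rfl | rfl | rfl <;> grind [G.adj_comm, G.irrefl]
    · have := hout c
      grind [G.adj_comm, G.irrefl]

namespace SameConnectedTriples

variable {G H}

lemma symm (h : G.SameConnectedTriples H) : H.SameConnectedTriples G :=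
  fun a b c hab hac hbc => (h a b c hab hac hbc).symm

lemma adj_or_adj_iff (h : G.SameConnectedTriples H) (huv : G.Adj u v) (hH : ¬H.Adj u v)
    (hau : a ≠ u) (hav : a ≠ v) :
    G.Adj u a ∨ G.Adj v a ↔ H.Adj u a ∧ H.Adj v a := by
  have := h u v a huv.ne hau.symm hav.symm
  simp only [TripleConnected, huv, hH, true_and, false_and, false_or] at this
  tauto

lemma adj_iff_of_alternating_cycle (h : G.SameConnectedTriples H) {p q r s : V}
    (hpq : G.Adj p q) (hpq' : ¬H.Adj p q) (hqr : H.Adj q r) (hqr' : ¬G.Adj q r)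
    (hrs : G.Adj r s) (hrs' : ¬H.Adj r s) (hsp : H.Adj s p) (hsp' : ¬G.Adj s p)
    (hcp : c ≠ p) (hcq : c ≠ q) (hcr : c ≠ r) (hcs : c ≠ s) :
    (G.Adj p c ↔ G.Adj q c) ∧ (G.Adj q c ↔ G.Adj r c) ∧ (G.Adj r c ↔ G.Adj s c) := by
  have h1 := h.adj_or_adj_iff hpq hpq' hcp hcq
  have h2 := h.symm.adj_or_adj_iff hqr hqr' hcq hcr
  have h3 := h.adj_or_adj_iff hrs hrs' hcr hcs
  have h4 := h.symm.adj_or_adj_iff hsp hsp' hcs hcp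
  grind

lemma hasTwins_or_memP4 (h : G.SameConnectedTriples H) (huv : G.Adj u v) (hH : ¬H.Adj u v)
    (hua : G.Adj u a) (hva : ¬G.Adj v a) (hav : a ≠ v) : G.HasTwins ∨ G.MemP4 := by
  have hHa : H.Adj u a ∧ H.Adj v a := (h.adj_or_adj_iff huv hH hua.ne' hav).1 (Or.inl hua)
  by_cases hb : ∃ b, b ≠ u ∧ b ≠ v ∧ G.Adj a b ∧ ¬G.Adj v b
  · -- `u v a b` is a 4-cycle alternating between edges of `G` only and edges of `H` only
    obtain ⟨b, hbu, hbv, hab, hvb⟩ := hb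
    have hHb := h.symm.adj_or_adj_iff hHa.2 hva hbv hab.ne'
    have hHvb : ¬H.Adj v b := fun hH' => hvb (hHb.1 (Or.inl hH')).1
    have hHab : ¬H.Adj a b := fun hH' => hvb (hHb.1 (Or.inr hH')).1
    have hub : ¬G.Adj u b := fun hub => hHvb ((h.adj_or_adj_iff huv hH hbu hbv).1 (Or.inl hub)).2
    have hHub : H.Adj u b :=
      ((h.adj_or_adj_iff hab hHab hua.ne hbu.symm).1 (Or.inl hua.symm)).2.symm
    refine Or.inr (G.memP4_of_adj hav.symm hbu.symm huv.symm hua hab hva hvb hub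
      fun c hcv hcu hca hcb => ?_)
    have := h.adj_iff_of_alternating_cycle huv hH hHa.2 hva hab hHab hHub.symm
      (fun h' => hub h'.symm) hcu hcv hca hcb
    tauto
  · refine Or.inl ⟨a, v, hav, (G.neighborSet_sdiff_eq_iff).2 fun c hca hcv => ?_⟩
    by_cases hcu : c = u
    · subst hcu
      exact iff_of_true hua.symm huv.symm
    refine ⟨fun hac => by_contra fun hvc => hb ⟨c, hcu, hcv, hac, hvc⟩, fun hvc => ?_⟩
    have hHvc := ((h.adj_or_adj_iff huv hH hcu hcv).1 (Or.inr hvc)).2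
    exact ((h.symm.adj_or_adj_iff hHa.2 hva hcv hca).1 (Or.inl hHvc)).2

lemma le (h : G.SameConnectedTriples H) (hT : ¬G.HasTwins) (hP : ¬G.MemP4) : G ≤ H := by
  intro u v huv
  by_contra hH
  obtain ⟨a, hau, hav, hne⟩ : ∃ a, a ≠ u ∧ a ≠ v ∧ ¬(G.Adj u a ↔ G.Adj v a) := by
    by_contra! hall
    exact hT ⟨u, v, huv.ne, (G.neighborSet_sdiff_eq_iff).2 hall⟩
  rcases (by tauto : (G.Adj u a ∧ ¬G.Adj v a) ∨ (G.Adj v a ∧ ¬G.Adj u a)) with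
    ⟨hua, hva⟩ | ⟨hva, hua⟩
  · exact (h.hasTwins_or_memP4 huv hH hua hva hav).elim hT hP
  · exact (h.hasTwins_or_memP4 huv.symm (fun h' => hH h'.symm) hva hua hau).elim hT hP

lemma eq_of_le (h : G.SameConnectedTriples H) (hT : ¬G.HasTwins) (hle : G ≤ H) : H = G := by
  refine (le_antisymm hle fun u v huv => ?_).symm
  by_contra hG
  refine hT ⟨u, v, huv.ne, (G.neighborSet_sdiff_eq_iff).2 fun c hcu hcv => ?_⟩
  have := h.symm.adj_or_adj_iff huv hG hcu hcv
  exact ⟨fun hc => (this.1 (Or.inl (hle hc))).2, fun hc => (this.1 (Or.inr (hle hc))).1⟩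

end SameConnectedTriples

lemma exists_ne_sameConnectedTriples_of_hasTwins (hT : G.HasTwins) :
    ∃ H ≠ G, G.SameConnectedTriples H := by
  obtain ⟨u, v, huv, hN⟩ := hT
  exact ⟨G ∆ edge u v, G.symmDiff_edge_ne huv,
    G.sameConnectedTriples_symmDiff_edge ((G.neighborSet_sdiff_eq_iff).1 hN)⟩

lemma exists_ne_sameConnectedTriples_of_memP4 (hP : G.MemP4) :
    ∃ H ≠ G, G.SameConnectedTriples H := by
  classical
  obtain ⟨x, y, z, w, V', hxy, hxz, -, hyz, -, -, -, hNx, hNy, hNz, hNw⟩ := hP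
  have adj_iff {p : V} {s : Set V} (hN : G.neighborSet p = s) q : G.Adj p q ↔ q ∈ s := by
    rw [← mem_neighborSet, hN]
  refine ⟨G.comap (Equiv.swap y z), fun hswap => ?_, G.sameConnectedTriples_comap_swap
    (adj_iff hNx) (adj_iff hNy) (adj_iff hNz) (adj_iff hNw)⟩
  have hxz' : (G.comap (Equiv.swap y z)).Adj x y := by
    rw [hswap]; exact (adj_iff hNx y).2 (by simp)
  rw [comap_adj, Equiv.swap_apply_of_ne_of_ne hxy hxz, Equiv.swap_apply_left, adj_iff hNx] at hxz'
  have hzV' : z ∈ V' := by simpa [hyz.symm] using hxz'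
  exact G.irrefl ((adj_iff hNz z).2 (Or.inl hzV'))

theorem forall_sameConnectedTriples_eq_iff :
    (∀ H, G.SameConnectedTriples H → H = G) ↔ ¬G.HasTwins ∧ ¬G.MemP4 := by
  refine ⟨fun hU => ⟨fun hT => ?_, fun hP => ?_⟩, fun ⟨hT, hP⟩ H hH => hH.eq_of_le hT (hH.le hT hP)⟩
  · obtain ⟨H, hne, hH⟩ := G.exists_ne_sameConnectedTriples_of_hasTwins hT
    exact hne (hU H hH)
  · obtain ⟨H, hne, hH⟩ := G.exists_ne_sameConnectedTriples_of_memP4 hP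
    exact hne (hU H hH)

end SimpleGraph

theorem stmt_0_general {V : Type*} (G : SimpleGraph V) :
    (∀ H : SimpleGraph V,
        (∀ T : Finset V, T.card = 3 →
          (¬ (H.induce (T : Set V)).Connected ↔ ¬ (G.induce (T : Set V)).Connected)) →
        H = G) ↔
      ((¬ ∃ u v : V, u ≠ v ∧
          G.neighborSet u \ {v} = G.neighborSet v \ {u}) ∧
        ¬ ∃ (x y z w : V) (V' : Set V),
          x ≠ y ∧ x ≠ z ∧ x ≠ w ∧ y ≠ z ∧ y ≠ w ∧ z ≠ w ∧
          V' ⊆ ({x, y, z, w} : Set V)ᶜ ∧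
          G.neighborSet x = V' ∪ {y} ∧
          G.neighborSet y = V' ∪ {x, z} ∧
          G.neighborSet z = V' ∪ {y, w} ∧
          G.neighborSet w = V' ∪ {z}) := by
  simp only [SimpleGraph.sameConnectedTriples_iff]
  exact G.forall_sameConnectedTriples_eq_iff

/-- Uniqueness of graph reconstruction from the 3-cut complex:
a graph `G` on `n ≥ 5` vertices is the unique graph with its 3-cut complex
iff `G` has no twins and `G` is not in the family `𝒫₄`. -/
theorem stmt_0 {V : Type*} [Fintype V] [DecidableEq V] (G : SimpleGraph V)
    (hn : 5 ≤ Fintype.card V) :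
    (∀ H : SimpleGraph V,
        (∀ T : Finset V, T.card = 3 →
          (¬ (H.induce (T : Set V)).Connected ↔ ¬ (G.induce (T : Set V)).Connected)) →
        H = G) ↔
      ((¬ ∃ u v : V, u ≠ v ∧
          G.neighborSet u \ {v} = G.neighborSet v \ {u}) ∧
        ¬ ∃ (x y z w : V) (V' : Set V),
          x ≠ y ∧ x ≠ z ∧ x ≠ w ∧ y ≠ z ∧ y ≠ w ∧ z ≠ w ∧
          V' ⊆ ({x, y, z, w} : Set V)ᶜ ∧
          G.neighborSet x = V' ∪ {y} ∧
          G.neighborSet y = V' ∪ {x, z} ∧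
          G.neighborSet z = V' ∪ {y, w} ∧
          G.neighborSet w = V' ∪ {z}) :=
  stmt_0_general G
end

section
/- Let G be a graph on a finite vertex set V with |V| = n ≥ 3. Then the following are equivalent: (a) for every graph H on V, if every 3-element subset of V is an independent set in H exactly when it is an independent set in G (i.e. Δ₃ᵗ(H) = Δ₃ᵗ(G)), then H = G; (b) G has no dominating pair. -/
/-- Pairwise non-adjacency on an explicit triple. -/
lemma triple_pairwise {V : Type*} [DecidableEq V] (X : SimpleGraph V) {a b c : V}
    (hab : a ≠ b) (hac : a ≠ c) (hbc : b ≠ c)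
    (h1 : ¬ X.Adj a b) (h2 : ¬ X.Adj a c) (h3 : ¬ X.Adj b c) :
    ((({a, b, c} : Finset V) : Set V)).Pairwise (fun x y => ¬ X.Adj x y) := by
  intro x hx y hy hxy
  simp only [Finset.coe_insert, Finset.coe_singleton, Set.mem_insert_iff,
    Set.mem_singleton_iff] at hx hy
  rcases hx with rfl | rfl | rfl <;> rcases hy with rfl | rfl | rfl <;>
    first
      | exact absurd rfl hxy
      | assumption
      | (intro h; exact h1 h.symm)
      | (intro h; exact h2 h.symm)
      | (intro h; exact h3 h.symm)

lemma triple_card {V : Type*} [DecidableEq V] {a b c : V}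
    (hab : a ≠ b) (hac : a ≠ c) (hbc : b ≠ c) : ({a, b, c} : Finset V).card = 3 := by
  rw [Finset.card_insert_of_notMem (by simp [hab, hac]),
    Finset.card_insert_of_notMem (by simp [hbc]), Finset.card_singleton]

lemma mem_triple {V : Type*} [DecidableEq V] (a b c : V) :
    a ∈ ((({a, b, c} : Finset V) : Set V)) ∧ b ∈ ((({a, b, c} : Finset V) : Set V)) ∧
      c ∈ ((({a, b, c} : Finset V) : Set V)) := by
  refine ⟨?_, ?_, ?_⟩ <;> simp

/-- Uniqueness of graph reconstruction from the total 3-cut complex: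
a graph `G` on `n ≥ 3` vertices is the unique graph with its total 3-cut complex
iff `G` has no dominating pair. -/
theorem stmt_1 {V : Type*} [Fintype V] [DecidableEq V] (G : SimpleGraph V)
    (hn : 3 ≤ Fintype.card V) :
    (∀ H : SimpleGraph V,
        (∀ T : Finset V, T.card = 3 →
          ((T : Set V).Pairwise (fun a b => ¬ H.Adj a b) ↔
            (T : Set V).Pairwise (fun a b => ¬ G.Adj a b))) →
        H = G) ↔
      ¬ ∃ u v : V, u ≠ v ∧ ∀ x : V, x ≠ u → x ≠ v → (G.Adj u x ∨ G.Adj v x) := by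
  constructor
  · -- uniqueness → no dominating pair
    intro hu ⟨u, v, huv, hdom⟩
    -- helper: any triple T containing u and v has a third vertex adjacent to u or v
    have third : ∀ T : Finset V, T.card = 3 → u ∈ T → v ∈ T →
        ∃ x ∈ T, x ≠ u ∧ x ≠ v ∧ (G.Adj u x ∨ G.Adj v x) := by
      intro T hT hu' hv'
      have hv'' : v ∈ T.erase u := Finset.mem_erase.mpr ⟨huv.symm, hv'⟩
      have h1 : ((T.erase u).erase v).Nonempty := by
        rw [← Finset.card_pos, Finset.card_erase_of_mem hv'',
          Finset.card_erase_of_mem hu', hT]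
        omega
      obtain ⟨x, hx⟩ := h1
      rw [Finset.mem_erase, Finset.mem_erase] at hx
      exact ⟨x, hx.2.2, hx.2.1, hx.1, hdom x hx.2.1 hx.1⟩
    by_cases hGuv : G.Adj u v
    · -- delete the edge uv
      set H := G.deleteEdges {s(u, v)} with hH
      have hHadj : ∀ a b, H.Adj a b ↔ G.Adj a b ∧ s(a, b) ≠ s(u, v) := by
        intro a b; rw [hH, SimpleGraph.deleteEdges_adj]; simp
      have hne : H ≠ G := by
        intro h
        have : H.Adj u v := h ▸ hGuv
        rw [hHadj] at this
        exact this.2 rfl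
      apply hne
      apply hu H
      intro T hT
      constructor
      · intro hp a ha b hb hab hG
        by_cases hsab : s(a, b) = s(u, v)
        · -- a,b is the pair u,v; use the third vertex
          have huvT : u ∈ T ∧ v ∈ T := by
            rw [Sym2.eq_iff] at hsab
            rcases hsab with ⟨rfl, rfl⟩ | ⟨rfl, rfl⟩
            · exact ⟨ha, hb⟩
            · exact ⟨hb, ha⟩
          obtain ⟨x, hxT, hxu, hxv, hadj⟩ := third T hT huvT.1 huvT.2
          rcases hadj with h | h
          · refine hp huvT.1 hxT (Ne.symm hxu) ?_
            rw [hHadj]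
            refine ⟨h, ?_⟩
            rw [Ne, Sym2.eq_iff]
            rintro (⟨-, rfl⟩ | ⟨rfl, rfl⟩)
            · exact hxv rfl
            · exact huv rfl
          · refine hp huvT.2 hxT (Ne.symm hxv) ?_
            rw [hHadj]
            refine ⟨h, ?_⟩
            rw [Ne, Sym2.eq_iff]
            rintro (⟨rfl, -⟩ | ⟨-, rfl⟩)
            · exact huv rfl
            · exact hxu rfl
        · exact hp ha hb hab ((hHadj a b).mpr ⟨hG, hsab⟩)
      · intro hp a ha b hb hab hHab
        exact hp ha hb hab ((hHadj a b).mp hHab).1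
    · -- add the edge uv
      set H := G ⊔ SimpleGraph.fromEdgeSet {s(u, v)} with hH
      have hHadj : ∀ a b, H.Adj a b ↔ G.Adj a b ∨ (s(a, b) = s(u, v) ∧ a ≠ b) := by
        intro a b; rw [hH, SimpleGraph.sup_adj, SimpleGraph.fromEdgeSet_adj]; simp
      have hne : H ≠ G := by
        intro h
        have : H.Adj u v := (hHadj u v).mpr (Or.inr ⟨rfl, huv⟩)
        rw [h] at this
        exact hGuv this
      apply hne
      apply hu H
      intro T hT
      constructor
      · intro hp a ha b hb hab hG
        exact hp ha hb hab ((hHadj a b).mpr (Or.inl hG))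
      · intro hp a ha b hb hab hHab
        rcases (hHadj a b).mp hHab with h | ⟨hsab, _⟩
        · exact hp ha hb hab h
        · have huvT : u ∈ T ∧ v ∈ T := by
            rw [Sym2.eq_iff] at hsab
            rcases hsab with ⟨rfl, rfl⟩ | ⟨rfl, rfl⟩
            · exact ⟨ha, hb⟩
            · exact ⟨hb, ha⟩
          obtain ⟨x, hxT, hxu, hxv, hadj⟩ := third T hT huvT.1 huvT.2
          rcases hadj with h | h
          · exact hp huvT.1 hxT (Ne.symm hxu) h
          · exact hp huvT.2 hxT (Ne.symm hxv) h
  · -- no dominating pair → uniqueness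
    intro hnd H hHG
    push_neg at hnd
    have wit : ∀ a b : V, a ≠ b → ∃ x, x ≠ a ∧ x ≠ b ∧ ¬ G.Adj a x ∧ ¬ G.Adj b x := by
      intro a b hab
      obtain ⟨x, hxa, hxb, hx⟩ := hnd a b hab
      exact ⟨x, hxa, hxb, hx.1, hx.2⟩
    -- step 1 : non-edges of G are non-edges of H
    have step1 : ∀ a b : V, a ≠ b → ¬ G.Adj a b → ¬ H.Adj a b := by
      intro a b hab hG
      obtain ⟨x, hxa, hxb, h1, h2⟩ := wit a b hab
      have hcard := triple_card hab (Ne.symm hxa) (Ne.symm hxb)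
      have hpG := triple_pairwise G hab (Ne.symm hxa) (Ne.symm hxb) hG h1 h2
      have hpH := (hHG _ hcard).mpr hpG
      have hm := mem_triple (V := V) a b x
      exact hpH hm.1 hm.2.1 hab
    ext a b
    constructor
    · intro hH
      by_contra hG
      exact step1 a b hH.ne hG hH
    · intro hG
      by_contra hHab
      obtain ⟨x, hxa, hxb, h1, h2⟩ := wit a b hG.ne
      have hcard := triple_card hG.ne (Ne.symm hxa) (Ne.symm hxb)
      have hpH := triple_pairwise H hG.ne (Ne.symm hxa) (Ne.symm hxb) hHab
        (step1 a x (Ne.symm hxa) h1) (step1 b x (Ne.symm hxb) h2)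
      have hpG := (hHG _ hcard).mp hpH
      have hm := mem_triple (V := V) a b x
      exact hpG hm.1 hm.2.1 hG.ne hG
end

section
/- Let G be a graph on a finite vertex set V with |V| = n ≥ 4, let u ≠ v be non-adjacent vertices of G, and let G' be the graph obtained from G by adding the edge uv. Then every 3-element subset of V induces a disconnected subgraph in G exactly when it induces a disconnected subgraph in G' (i.e. Δ₃(G) = Δ₃(G')) if and only if u and v are twins in G. -/
open SimpleGraph

lemma isolated_not_connected {V : Type*} (G : SimpleGraph V) {S : Set V}
    (x y : S) (hxy : x ≠ y) (h : ∀ z : S, ¬ (G.induce S).Adj x z) :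
    ¬ (G.induce S).Connected := by
  intro hc
  obtain ⟨p⟩ := hc.preconnected x y
  cases p with
  | nil => exact hxy rfl
  | cons h' _ => exact h _ h'

lemma three_connected {V : Type*} (G : SimpleGraph V) (a b c : V)
    (hab : a ≠ b) (hac : a ≠ c) (hbc : b ≠ c) :
    (G.induce ({a, b, c} : Set V)).Connected ↔
      (G.Adj a b ∧ G.Adj a c) ∨ (G.Adj a b ∧ G.Adj b c) ∨ (G.Adj a c ∧ G.Adj b c) := by
  have ha : a ∈ ({a, b, c} : Set V) := by simp
  have hb : b ∈ ({a, b, c} : Set V) := by simp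
  have hc : c ∈ ({a, b, c} : Set V) := by simp
  constructor
  · intro hconn
    by_cases h1 : G.Adj a b <;> by_cases h2 : G.Adj a c <;> by_cases h3 : G.Adj b c <;>
      try tauto
    · -- only ab: c isolated
      exfalso
      refine isolated_not_connected G (S := {a,b,c}) ⟨c, hc⟩ ⟨a, ha⟩ (by simp [hac.symm]) ?_ hconn
      rintro ⟨z, hz⟩ hadj
      simp only [Set.mem_insert_iff, Set.mem_singleton_iff] at hz
      rcases hz with rfl | rfl | rfl
      · exact h2 hadj.symm
      · exact h3 hadj.symm
      · exact G.irrefl hadj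
    · -- only ac: b isolated
      exfalso
      refine isolated_not_connected G (S := {a,b,c}) ⟨b, hb⟩ ⟨a, ha⟩ (by simp [hab.symm]) ?_ hconn
      rintro ⟨z, hz⟩ hadj
      simp only [Set.mem_insert_iff, Set.mem_singleton_iff] at hz
      rcases hz with rfl | rfl | rfl
      · exact h1 hadj.symm
      · exact G.irrefl hadj
      · exact h3 hadj
    · -- only bc: a isolated
      exfalso
      refine isolated_not_connected G (S := {a,b,c}) ⟨a, ha⟩ ⟨b, hb⟩ (by simp [hab]) ?_ hconn
      rintro ⟨z, hz⟩ hadj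
      simp only [Set.mem_insert_iff, Set.mem_singleton_iff] at hz
      rcases hz with rfl | rfl | rfl
      · exact G.irrefl hadj
      · exact h1 hadj
      · exact h2 hadj
    · -- none: a isolated
      exfalso
      refine isolated_not_connected G (S := {a,b,c}) ⟨a, ha⟩ ⟨b, hb⟩ (by simp [hab]) ?_ hconn
      rintro ⟨z, hz⟩ hadj
      simp only [Set.mem_insert_iff, Set.mem_singleton_iff] at hz
      rcases hz with rfl | rfl | rfl
      · exact G.irrefl hadj
      · exact h1 hadj
      · exact h2 hadj
  · intro h
    rw [connected_iff_exists_forall_reachable]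
    rcases h with ⟨h1, h2⟩ | ⟨h1, h3⟩ | ⟨h2, h3⟩
    · refine ⟨⟨a, ha⟩, ?_⟩
      rintro ⟨z, hz⟩
      simp only [Set.mem_insert_iff, Set.mem_singleton_iff] at hz
      rcases hz with rfl | rfl | rfl
      · exact Reachable.refl _
      · exact Adj.reachable h1
      · exact Adj.reachable h2
    · refine ⟨⟨b, hb⟩, ?_⟩
      rintro ⟨z, hz⟩
      simp only [Set.mem_insert_iff, Set.mem_singleton_iff] at hz
      rcases hz with rfl | rfl | rfl
      · exact Adj.reachable h1.symm
      · exact Reachable.refl _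
      · exact Adj.reachable h3
    · refine ⟨⟨c, hc⟩, ?_⟩
      rintro ⟨z, hz⟩
      simp only [Set.mem_insert_iff, Set.mem_singleton_iff] at hz
      rcases hz with rfl | rfl | rfl
      · exact Adj.reachable h2.symm
      · exact Adj.reachable h3.symm
      · exact Reachable.refl _

/-- Adding an edge `uv` does not change the 3-cut complex iff `u` and `v`
are twins in `G`. -/
theorem stmt_2 {V : Type*} [Fintype V] [DecidableEq V] (G : SimpleGraph V)
    (hn : 4 ≤ Fintype.card V) (u v : V) (huv : u ≠ v) (hadj : ¬ G.Adj u v)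
    (G' : SimpleGraph V) (hG' : G' = SimpleGraph.fromEdgeSet (G.edgeSet ∪ {s(u, v)})) :
    (∀ T : Finset V, T.card = 3 →
        (¬ (G.induce (T : Set V)).Connected ↔ ¬ (G'.induce (T : Set V)).Connected)) ↔
      G.neighborSet u \ {v} = G.neighborSet v \ {u} := by
  have hA' : ∀ a b, G'.Adj a b ↔ (G.Adj a b ∨ (a = u ∧ b = v) ∨ (a = v ∧ b = u)) := by
    intro a b
    rw [hG', SimpleGraph.fromEdgeSet_adj]
    simp only [Set.mem_union, SimpleGraph.mem_edgeSet, Set.mem_singleton_iff, Sym2.eq_iff]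
    constructor
    · rintro ⟨h, _⟩; tauto
    · rintro (h | ⟨rfl, rfl⟩ | ⟨rfl, rfl⟩)
      · exact ⟨Or.inl h, h.ne⟩
      · exact ⟨Or.inr (Or.inl ⟨rfl, rfl⟩), huv⟩
      · exact ⟨Or.inr (Or.inr ⟨rfl, rfl⟩), huv.symm⟩
  have hGuv' : G'.Adj u v := (hA' u v).mpr (Or.inr (Or.inl ⟨rfl, rfl⟩))
  have hAw : ∀ w, w ≠ u → w ≠ v → ((G'.Adj u w ↔ G.Adj u w) ∧ (G'.Adj v w ↔ G.Adj v w)) := by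
    intro w hwu hwv
    constructor
    · rw [hA']
      constructor
      · rintro (h | ⟨-, rfl⟩ | ⟨h, -⟩)
        · exact h
        · exact absurd rfl hwv
        · exact absurd h huv
      · exact fun h => Or.inl h
    · rw [hA']
      constructor
      · rintro (h | ⟨h, -⟩ | ⟨-, rfl⟩)
        · exact h
        · exact absurd h huv.symm
        · exact absurd rfl hwu
      · exact fun h => Or.inl h
  have htw : (G.neighborSet u \ {v} = G.neighborSet v \ {u}) ↔
      ∀ w, w ≠ u → w ≠ v → (G.Adj u w ↔ G.Adj v w) := by
    constructor
    · intro h w hwu hwv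
      have := Set.ext_iff.mp h w
      simp only [Set.mem_diff, SimpleGraph.mem_neighborSet, Set.mem_singleton_iff] at this
      tauto
    · intro h
      ext w
      simp only [Set.mem_diff, SimpleGraph.mem_neighborSet, Set.mem_singleton_iff]
      by_cases hwu : w = u
      · subst hwu; simp [G.irrefl]
      · by_cases hwv : w = v
        · subst hwv; simp [G.irrefl]
        · have := h w hwu hwv
          tauto
  rw [htw]
  constructor
  · -- forward
    intro H w hwu hwv
    have hc3 : ({u, v, w} : Finset V).card = 3 := by
      rw [Finset.card_insert_of_notMem (by simp [huv, Ne.symm hwu]),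
        Finset.card_insert_of_notMem (by simp [Ne.symm hwv])]
      rfl
    have hcoe : ((({u, v, w} : Finset V) : Set V)) = ({u, v, w} : Set V) := by simp
    have HT := H {u, v, w} hc3
    rw [hcoe] at HT
    rw [not_iff_not] at HT
    rw [three_connected G u v w huv (Ne.symm hwu) (Ne.symm hwv),
      three_connected G' u v w huv (Ne.symm hwu) (Ne.symm hwv)] at HT
    obtain ⟨e1, e2⟩ := hAw w hwu hwv
    rw [e1, e2] at HT
    constructor
    · intro h
      rcases HT.mpr (Or.inl ⟨hGuv', h⟩) with ⟨h', -⟩ | ⟨h', -⟩ | ⟨-, h'⟩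
      · exact absurd h' hadj
      · exact absurd h' hadj
      · exact h'
    · intro h
      rcases HT.mpr (Or.inr (Or.inl ⟨hGuv', h⟩)) with ⟨h', -⟩ | ⟨h', -⟩ | ⟨h', -⟩
      · exact absurd h' hadj
      · exact absurd h' hadj
      · exact h' 
  · -- backward
    intro htw' T hT3
    by_cases hmem : u ∈ T ∧ v ∈ T
    · obtain ⟨hu, hv⟩ := hmem
      have hsub : ({u, v} : Finset V) ⊆ T := by
        intro x hx
        simp only [Finset.mem_insert, Finset.mem_singleton] at hx
        rcases hx with rfl | rfl <;> assumption
      have hcard2 : ({u, v} : Finset V).card = 2 := by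
        rw [Finset.card_insert_of_notMem (by simp [huv]), Finset.card_singleton]
      have h1 : (T \ {u, v}).card = 1 := by
        rw [Finset.card_sdiff_of_subset hsub, hT3, hcard2]
      obtain ⟨w, hw⟩ := Finset.card_eq_one.mp h1
      have hwmem : w ∈ T \ ({u, v} : Finset V) := by rw [hw]; exact Finset.mem_singleton_self w
      have hw2 := Finset.mem_sdiff.mp hwmem
      have hwu : w ≠ u := fun h => hw2.2 (by simp [h])
      have hwv : w ≠ v := fun h => hw2.2 (by simp [h])
      have hTeq : T = ({u, v, w} : Finset V) := by
        rw [← Finset.union_sdiff_of_subset hsub, hw]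
        ext x
        simp only [Finset.mem_union, Finset.mem_insert, Finset.mem_singleton]
        tauto
      subst hTeq
      have hcoe : ((({u, v, w} : Finset V) : Set V)) = ({u, v, w} : Set V) := by simp
      rw [hcoe, not_iff_not,
        three_connected G u v w huv (Ne.symm hwu) (Ne.symm hwv),
        three_connected G' u v w huv (Ne.symm hwu) (Ne.symm hwv)]
      obtain ⟨e1, e2⟩ := hAw w hwu hwv
      rw [e1, e2]
      have hiff := htw' w hwu hwv
      constructor
      · rintro (⟨h', -⟩ | ⟨h', -⟩ | ⟨h1, h2⟩)
        · exact absurd h' hadj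
        · exact absurd h' hadj
        · exact Or.inr (Or.inr ⟨h1, h2⟩)
      · rintro (⟨-, h'⟩ | ⟨-, h'⟩ | ⟨h1, h2⟩)
        · exact Or.inr (Or.inr ⟨h', hiff.mp h'⟩)
        · exact Or.inr (Or.inr ⟨hiff.mpr h', h'⟩)
        · exact Or.inr (Or.inr ⟨h1, h2⟩)
    · -- induced graphs are equal
      have heq : G.induce (T : Set V) = G'.induce (T : Set V) := by
        ext ⟨a, ha⟩ ⟨b, hb⟩
        show G.Adj a b ↔ G'.Adj a b
        rw [hA']
        constructor
        · exact fun h => Or.inl h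
        · rintro (h | ⟨rfl, rfl⟩ | ⟨rfl, rfl⟩)
          · exact h
          · exact absurd ⟨ha, hb⟩ hmem
          · exact absurd ⟨hb, ha⟩ hmem
      rw [heq]
end

section
/- Let G and H be graphs on the same finite vertex set V with |V| = n ≥ 4. If every 3-element subset of V induces a disconnected subgraph in G exactly when it induces a disconnected subgraph in H (i.e. Δ₃(G) = Δ₃(H)), and the edge set of G is a proper subset of the edge set of H, then G has a pair of twin vertices. -/
/-- A 3-vertex induced graph with edges `ab` and `ac` is connected. -/
lemma conn3 {V : Type*} (G : SimpleGraph V) (a b c : V)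
    (h1 : G.Adj a b) (h2 : G.Adj a c) :
    (G.induce ({a, b, c} : Set V)).Connected := by
  have ha : a ∈ ({a, b, c} : Set V) := by simp
  have ra : ∀ u : ({a, b, c} : Set V),
      (G.induce ({a, b, c} : Set V)).Reachable u ⟨a, ha⟩ := by
    rintro ⟨x, hx⟩
    simp only [Set.mem_insert_iff, Set.mem_singleton_iff] at hx
    rcases hx with rfl | rfl | rfl
    · exact SimpleGraph.Reachable.refl _
    · exact SimpleGraph.Adj.reachable (show G.Adj x a from h1.symm)
    · exact SimpleGraph.Adj.reachable (show G.Adj x a from h2.symm)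
  haveI : Nonempty ({a, b, c} : Set V) := ⟨⟨a, ha⟩⟩
  exact SimpleGraph.Connected.mk (fun u v => (ra u).trans (ra v).symm)

/-- If `b` is isolated within `{a,b,c}` and `a ≠ b`, the induced graph is disconnected. -/
lemma disc3 {V : Type*} (G : SimpleGraph V) (a b c : V)
    (hba : b ≠ a) (h1 : ¬ G.Adj a b) (h2 : ¬ G.Adj b c) :
    ¬ (G.induce ({a, b, c} : Set V)).Connected := by
  intro hc
  have ha : a ∈ ({a, b, c} : Set V) := by simp
  have hb : b ∈ ({a, b, c} : Set V) := by simp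
  obtain ⟨w⟩ := hc.preconnected ⟨b, hb⟩ ⟨a, ha⟩
  have hne : (⟨b, hb⟩ : ({a, b, c} : Set V)) ≠ ⟨a, ha⟩ :=
    fun h => hba (congrArg Subtype.val h)
  have hadj := w.adj_snd (SimpleGraph.Walk.not_nil_of_ne hne)
  have hadj' : G.Adj b ((w.getVert 1 : ({a, b, c} : Set V)) : V) := hadj
  have hy := (w.getVert 1).2
  simp only [Set.mem_insert_iff, Set.mem_singleton_iff] at hy
  rcases hy with h | h | h <;> rw [h] at hadj'
  · exact h1 hadj'.symm
  · exact hadj'.ne rfl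
  · exact h2 hadj'

lemma aux3 {V : Type*} (G H : SimpleGraph V) (hle : G ≤ H) (a b c : V)
    (hab : a ≠ b)
    (hGab : ¬ G.Adj a b) (hHab : H.Adj a b)
    (hconn : (G.induce ({a, b, c} : Set V)).Connected ↔
      (H.induce ({a, b, c} : Set V)).Connected)
    (h : G.Adj a c) : G.Adj b c := by
  by_contra hbc'
  have hH : (H.induce ({a, b, c} : Set V)).Connected := conn3 H a b c hHab (hle h)
  exact disc3 G a b c hab.symm hGab hbc' (hconn.mpr hH)

/-- If `Δ₃(G) = Δ₃(H)` and `E(G) ⊊ E(H)`, then `G` has twins. -/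
theorem stmt_4 {V : Type*} [Fintype V] [DecidableEq V] (G H : SimpleGraph V)
    (hn : 4 ≤ Fintype.card V)
    (hcut : ∀ T : Finset V, T.card = 3 →
      (¬ (G.induce (T : Set V)).Connected ↔ ¬ (H.induce (T : Set V)).Connected))
    (hsub : G.edgeSet ⊂ H.edgeSet) :
    ∃ u v : V, u ≠ v ∧ G.neighborSet u \ {v} = G.neighborSet v \ {u} := by
  have hle : G ≤ H := SimpleGraph.edgeSet_subset_edgeSet.mp hsub.subset
  have hc3 : ∀ x y z : V, x ≠ y → x ≠ z → y ≠ z →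
      ((G.induce ({x, y, z} : Set V)).Connected ↔
        (H.induce ({x, y, z} : Set V)).Connected) := by
    intro x y z hxy hxz hyz
    have hT : ({x, y, z} : Finset V).card = 3 :=
      Finset.card_eq_three.mpr ⟨x, y, z, hxy, hxz, hyz, rfl⟩
    have hco : ((({x, y, z} : Finset V) : Set V)) = ({x, y, z} : Set V) := by simp
    have := hcut ({x, y, z} : Finset V) hT
    rw [hco] at this
    exact not_iff_not.mp this
  obtain ⟨e, heH, heG⟩ := Set.exists_of_ssubset hsub
  induction e using Sym2.ind with
  | _ a b =>
    rw [SimpleGraph.mem_edgeSet] at heH heG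
    have hab : a ≠ b := heH.ne
    refine ⟨a, b, hab, ?_⟩
    ext c
    simp only [Set.mem_diff, SimpleGraph.mem_neighborSet, Set.mem_singleton_iff]
    constructor
    · rintro ⟨hadj, hcb⟩
      refine ⟨?_, fun h => hadj.ne' h⟩
      exact aux3 G H hle a b c hab heG heH
        (hc3 a b c hab hadj.ne (Ne.symm hcb)) hadj
    · rintro ⟨hadj, hca⟩
      refine ⟨?_, fun h => hadj.ne' h⟩
      have hconn := hc3 b a c hab.symm hadj.ne (Ne.symm hca)
      exact aux3 G H hle b a c hab.symm (fun h => heG h.symm) heH.symm hconn hadj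
end

section
/- Let G be a graph on a finite vertex set V with |V| ≥ 4, and let x, y, z, w be four distinct vertices of G. If the induced subgraphs of G on {x,y,w} and on {x,y,z} are both disconnected, and the induced subgraph of G on {y,z,w} is connected or the induced subgraph of G on {x,z,w} is connected, then x and y are not adjacent in G. -/
/-!
If `x ~ y`, then a third vertex adjacent to `x` or to `y` would make the triangle on it
connected, so the disconnectedness of `G[{x,y,w}]` and `G[{x,y,z}]` means that neither `z` nor
`w` has a neighbour in `{x, y}`. But in a connected graph on `{y,z,w}` (resp. `{x,z,w}`) the
vertex `y` (resp. `x`) must have a neighbour among the other two.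
-/

namespace SimpleGraph

variable {V : Type*} {G : SimpleGraph V}

lemma induce_triple_connected_of_adj {a b c : V} (hab : G.Adj a b) (hac : G.Adj a c) :
    (G.induce {a, b, c}).Connected := by
  have hunion : ({a, b} ∪ {a, c} : Set V) = {a, b, c} := by
    ext; simp only [Set.mem_union, Set.mem_insert_iff, Set.mem_singleton_iff]; tauto
  rw [← hunion]
  exact induce_union_connected (induce_pair_connected_of_adj hab).preconnected
    (induce_pair_connected_of_adj hac).preconnected ⟨a, by simp⟩

lemma not_adj_of_adj_of_not_connected_induce_triple {a b c : V} (hab : G.Adj a b)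
    (h : ¬ (G.induce {a, b, c}).Connected) : ¬ G.Adj a c ∧ ¬ G.Adj b c := by
  refine ⟨fun hac ↦ h (induce_triple_connected_of_adj hab hac), fun hbc ↦ h ?_⟩
  rw [Set.insert_comm]
  exact induce_triple_connected_of_adj hab.symm hbc

lemma Connected.exists_adj_of_induce {s : Set V} (h : (G.induce s).Connected) {a b : V}
    (ha : a ∈ s) (hb : b ∈ s) (hab : a ≠ b) : ∃ c ∈ s, G.Adj a c := by
  have : Nontrivial s := ⟨⟨⟨a, ha⟩, ⟨b, hb⟩, fun h ↦ hab (congrArg Subtype.val h)⟩⟩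
  obtain ⟨c, hc⟩ := h.preconnected.exists_adj_of_nontrivial ⟨a, ha⟩
  exact ⟨c, c.2, hc⟩

lemma Connected.adj_or_adj_of_induce_triple {a b c : V} (h : (G.induce {a, b, c}).Connected)
    (hab : a ≠ b) : G.Adj a b ∨ G.Adj a c := by
  obtain ⟨d, hd, had⟩ := h.exists_adj_of_induce (by simp) (by simp) hab
  rcases hd with rfl | rfl | rfl
  · exact absurd had (G.irrefl)
  · exact .inl had
  · exact .inr had

end SimpleGraph

theorem stmt_5_general {V : Type*} (G : SimpleGraph V)
    (x y z w : V)
    (hxz : x ≠ z) (hyz : y ≠ z)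
    (h1 : ¬ (G.induce ({x, y, w} : Set V)).Connected)
    (h2 : ¬ (G.induce ({x, y, z} : Set V)).Connected)
    (h3 : (G.induce ({y, z, w} : Set V)).Connected ∨
          (G.induce ({x, z, w} : Set V)).Connected) :
    ¬ G.Adj x y := by
  intro hxy
  obtain ⟨hxw, hyw⟩ := SimpleGraph.not_adj_of_adj_of_not_connected_induce_triple hxy h1
  obtain ⟨hxz', hyz'⟩ := SimpleGraph.not_adj_of_adj_of_not_connected_induce_triple hxy h2
  rcases h3 with h | h
  · exact (h.adj_or_adj_of_induce_triple hyz).elim hyz' hyw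
  · exact (h.adj_or_adj_of_induce_triple hxz).elim hxz' hxw

/-- Key lemma (i): if `G[{x,y,w}]` and `G[{x,y,z}]` are disconnected while
`G[{y,z,w}]` or `G[{x,z,w}]` is connected, then `x ≁ y`. -/
theorem stmt_5 {V : Type*} [Fintype V] [DecidableEq V] (G : SimpleGraph V)
    (hn : 4 ≤ Fintype.card V) (x y z w : V)
    (hxy : x ≠ y) (hxz : x ≠ z) (hxw : x ≠ w) (hyz : y ≠ z) (hyw : y ≠ w) (hzw : z ≠ w)
    (h1 : ¬ (G.induce ({x, y, w} : Set V)).Connected)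
    (h2 : ¬ (G.induce ({x, y, z} : Set V)).Connected)
    (h3 : (G.induce ({y, z, w} : Set V)).Connected ∨
          (G.induce ({x, z, w} : Set V)).Connected) :
    ¬ G.Adj x y :=
  stmt_5_general G x y z w hxz hyz h1 h2 h3
end

section
/- Let G be a graph on a finite vertex set V with |V| ≥ 4, and let x, y, z, w be four distinct vertices of G. If the induced subgraphs of G on {x,y,w} and on {x,y,z} are both connected, and the induced subgraph of G on {y,z,w} is disconnected or the induced subgraph of G on {x,z,w} is disconnected, then x and y are adjacent in G. -/
private lemma adj_of_reachable {α : Type*} {H : SimpleGraph α} {u v : α}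
    (h : H.Reachable u v) (hne : u ≠ v) : ∃ t, H.Adj u t := by
  obtain ⟨p⟩ := h
  cases p with
  | nil => exact absurd rfl hne
  | cons h _ => exact ⟨_, h⟩

private lemma two_adj_of_conn {V : Type*} (G : SimpleGraph V) {a b c : V}
    (hab : a ≠ b) (h : (G.induce ({a, b, c} : Set V)).Connected) :
    G.Adj a b ∨ (G.Adj a c ∧ G.Adj b c) := by
  by_cases hadj : G.Adj a b
  · exact Or.inl hadj
  · right
    have ha : a ∈ ({a, b, c} : Set V) := by simp
    have hb : b ∈ ({a, b, c} : Set V) := by simp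
    constructor
    · have hr := h.preconnected ⟨a, ha⟩ ⟨b, hb⟩
      obtain ⟨t, ht⟩ := adj_of_reachable hr (by simp [Subtype.ext_iff, hab])
      have ht' : G.Adj a ↑t := ht
      rcases t.2 with h1 | h1 | h1 <;> rw [h1] at ht'
      · exact absurd ht' (G.irrefl)
      · exact absurd ht' hadj
      · exact ht'
    · have hr := h.preconnected ⟨b, hb⟩ ⟨a, ha⟩
      obtain ⟨t, ht⟩ := adj_of_reachable hr (by simp [Subtype.ext_iff, hab.symm])
      have ht' : G.Adj b ↑t := ht
      rcases t.2 with h1 | h1 | h1 <;> rw [h1] at ht'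
      · exact absurd ht' (fun h' => hadj h'.symm)
      · exact absurd ht' (G.irrefl)
      · exact ht'

private lemma conn_of_two {V : Type*} (G : SimpleGraph V) {a b c : V}
    (hab : G.Adj a b) (hac : G.Adj a c) :
    (G.induce ({a, b, c} : Set V)).Connected := by
  have ha : a ∈ ({a, b, c} : Set V) := by simp
  rw [SimpleGraph.connected_iff]
  refine ⟨fun u v => ?_, ⟨⟨a, ha⟩⟩⟩
  have key : ∀ u : ({a, b, c} : Set V), (G.induce ({a, b, c} : Set V)).Reachable u ⟨a, ha⟩ := by
    rintro ⟨u, hu | hu | hu⟩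
    · subst hu; exact SimpleGraph.Reachable.refl _
    · subst hu
      exact (SimpleGraph.Adj.reachable (by exact hab.symm))
    · subst hu
      exact (SimpleGraph.Adj.reachable (by exact hac.symm))
  exact (key u).trans (key v).symm

/-- Key lemma (ii): if `G[{x,y,w}]` and `G[{x,y,z}]` are connected while
`G[{y,z,w}]` or `G[{x,z,w}]` is disconnected, then `x ∼ y`. -/
theorem stmt_6 {V : Type*} [Fintype V] [DecidableEq V] (G : SimpleGraph V)
    (hn : 4 ≤ Fintype.card V) (x y z w : V)
    (hxy : x ≠ y) (hxz : x ≠ z) (hxw : x ≠ w) (hyz : y ≠ z) (hyw : y ≠ w) (hzw : z ≠ w)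
    (h1 : (G.induce ({x, y, w} : Set V)).Connected)
    (h2 : (G.induce ({x, y, z} : Set V)).Connected)
    (h3 : ¬ (G.induce ({y, z, w} : Set V)).Connected ∨
          ¬ (G.induce ({x, z, w} : Set V)).Connected) :
    G.Adj x y := by
  by_contra hadj
  rcases two_adj_of_conn G hxy h1 with h | ⟨hxw', hyw'⟩
  · exact hadj h
  rcases two_adj_of_conn G hxy h2 with h | ⟨hxz', hyz'⟩
  · exact hadj h
  rcases h3 with h3 | h3
  · exact h3 (conn_of_two G hyz' hyw')
  · exact h3 (conn_of_two G hxz' hxw')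
end

section
/- Let G be a finite graph and let A ≠ B be subsets of its vertex set with |A| = |B| = k, such that the induced subgraphs G[A] and G[B] are connected and A ∩ B ≠ ∅. Then there exists a vertex subset C with |C| = k such that G[C] is connected and |A ∩ C| = k − 1. -/
/-!
As `|A| = |B|` and `A ≠ B`, the set `B` leaves `A`; since `G[B]` is connected and meets `A`, some
edge `yx` has `y ∈ A` and `x ∉ A`. Then `G[A ∪ {x}]` is connected on `k + 1` vertices, and
deleting a leaf `a ≠ x` of one of its spanning trees keeps it connected, so
`C = (A ∪ {x}) \ {a}` works.
-/

namespace SimpleGraph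

variable {V : Type*} {G : SimpleGraph V}

lemma Connected.exists_ne_connected_induce_compl_singleton [Finite V] [Nontrivial V]
    (hG : G.Connected) (x : V) : ∃ v ≠ x, (G.induce {v}ᶜ).Connected := by
  obtain ⟨T, hTG, hT⟩ := hG.exists_isTree_le
  have := Fintype.ofFinite V
  classical
  obtain ⟨u, v, huv, hu, hv⟩ := hT.exists_ne_and_degree_eq_one
  have connected_of_leaf {w : V} (hw : T.degree w = 1) : (G.induce {w}ᶜ).Connected :=
    (hT.connected.induce_compl_singleton_of_degree_eq_one hw).mono (fun _ _ h => hTG h)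
  by_cases hux : u = x
  · exact ⟨v, fun hvx => huv (hux.trans hvx.symm), connected_of_leaf hv⟩
  · exact ⟨u, hux, connected_of_leaf hu⟩

lemma exists_mem_ne_connected_induce_erase [DecidableEq V] {s : Finset V}
    (hs : (G.induce (s : Set V)).Connected) (hnt : s.Nontrivial) {x : V} (hx : x ∈ s) :
    ∃ a ∈ s, a ≠ x ∧ (G.induce (s.erase a : Set V)).Connected := by
  have : Nontrivial s := Set.nontrivial_coe_sort.mpr (Finset.nontrivial_coe.mpr hnt)
  obtain ⟨⟨a, ha⟩, hax, hconn⟩ := hs.exists_ne_connected_induce_compl_singleton ⟨x, hx⟩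
  refine ⟨a, ha, fun h => hax (Subtype.ext h), ?_⟩
  have hmaps : Set.MapsTo (Embedding.induce (G := G) s).toHom {⟨a, ha⟩}ᶜ (s.erase a : Set V) :=
    fun w hw => by simpa [Subtype.ext_iff] using And.intro hw w.2
  refine hconn.map (induceHom _ hmaps) ?_
  rintro ⟨w, hw⟩
  rw [Finset.coe_erase, Set.mem_sdiff, Set.mem_singleton_iff] at hw
  exact ⟨⟨⟨w, hw.1⟩, fun h => hw.2 (congrArg Subtype.val h)⟩, rfl⟩

lemma exists_adj_of_connected_induce {s t : Set V} (ht : (G.induce t).Connected)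
    (hst : (s ∩ t).Nonempty) (hts : ¬t ⊆ s) : ∃ y ∈ s ∩ t, ∃ x ∈ t \ s, G.Adj y x := by
  obtain ⟨u, hus, hut⟩ := hst
  obtain ⟨v, hvt, hvs⟩ := Set.not_subset.mp hts
  obtain ⟨p⟩ := ht.preconnected ⟨u, hut⟩ ⟨v, hvt⟩
  obtain ⟨d, -, hd₁, hd₂⟩ := p.exists_boundary_dart (Subtype.val ⁻¹' s) hus hvs
  exact ⟨d.fst, ⟨hd₁, d.fst.2⟩, d.snd, ⟨d.snd.2, hd₂⟩, d.adj⟩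

lemma Connected.induce_insert_of_adj {s : Set V} {x y : V} (hs : (G.induce s).Connected)
    (hy : y ∈ s) (hxy : G.Adj y x) : (G.induce (insert x s)).Connected := by
  have hunion : insert x s = s ∪ {y, x} := by
    rw [Set.union_insert, Set.insert_eq_of_mem (Set.mem_union_left _ hy), Set.union_singleton]
  rw [hunion]
  exact induce_union_connected hs.preconnected (induce_pair_connected_of_adj hxy).preconnected
    ⟨y, hy, Set.mem_insert y _⟩

end SimpleGraph

open Finset SimpleGraph

theorem stmt_8_general {V : Type*} [DecidableEq V] (G : SimpleGraph V) (k : ℕ)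
    (A B : Finset V) (hne : A ≠ B) (hA : A.card = k) (hB : B.card = k)
    (hAc : (G.induce (A : Set V)).Connected) (hBc : (G.induce (B : Set V)).Connected)
    (hAB : (A ∩ B).Nonempty) :
    ∃ C : Finset V, C.card = k ∧ (G.induce (C : Set V)).Connected ∧
      (A ∩ C).card = k - 1 := by
  have hBA : ¬(B : Set V) ⊆ A := fun h =>
    hne (eq_of_subset_of_card_le (coe_subset.mp h) (hA.trans hB.symm).le).symm
  obtain ⟨y, ⟨hyA, -⟩, x, ⟨-, hxA⟩, hyx⟩ :=
    exists_adj_of_connected_induce hBc (by exact_mod_cast hAB) hBA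
  have hS : (G.induce (insert x A : Finset V)).Connected := by
    rw [coe_insert]
    exact hAc.induce_insert_of_adj hyA hyx
  obtain ⟨a, haS, hax, hC⟩ := exists_mem_ne_connected_induce_erase hS
    ⟨x, mem_insert_self x A, y, mem_insert_of_mem hyA, hyx.ne.symm⟩ (mem_insert_self x A)
  have haA : a ∈ A := (mem_insert.mp haS).resolve_left hax
  refine ⟨(insert x A).erase a, ?_, hC, ?_⟩
  · rw [card_erase_of_mem haS, card_insert_of_notMem hxA, hA, Nat.add_sub_cancel]
  · rw [inter_erase, inter_insert_of_notMem hxA, inter_self, card_erase_of_mem haA, hA]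

/-- For two distinct intersecting connected `k`-sets `A`, `B`, there is a connected
`k`-set `C` sharing all but one vertex with `A`. -/
theorem stmt_8 {V : Type*} [Fintype V] [DecidableEq V] (G : SimpleGraph V) (k : ℕ)
    (A B : Finset V) (hne : A ≠ B) (hA : A.card = k) (hB : B.card = k)
    (hAc : (G.induce (A : Set V)).Connected) (hBc : (G.induce (B : Set V)).Connected)
    (hAB : (A ∩ B).Nonempty) :
    ∃ C : Finset V, C.card = k ∧ (G.induce (C : Set V)).Connected ∧
      (A ∩ C).card = k - 1 :=
  stmt_8_general G k A B hne hA hB hAc hBc hAB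
end

section
/- Let V be a finite set with |V| = n ≥ 3 and let S be any nonempty subset of V. Then there exists a graph G on V such that S = {v ∈ V : the induced subgraph of G on V∖{v} is disconnected}. -/
/-!
Relabel `V` as `Fin n` so that `S` becomes `{0, …, k-1}`. If `k = n`, the empty graph works.
If `k = n - 1`, take the complete graph on `{0, …, k-1}` and leave `k` isolated: deleting any
other vertex leaves `k` isolated next to a third vertex. Otherwise take the caterpillar with
spine `0 – ⋯ – (k-1)`, the leaf `k` at `0` and the leaves `k+1, …` at `k-1`. Deleting a leaf
from a connected graph keeps it connected, while deleting a spine vertex `d` cuts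
`{0, …, d-1, k}` off from the rest, which contains `k + 1`.
-/

theorem Fintype.exists_ne_ne_of_two_lt_card {V : Type*} [Fintype V] (h : 2 < Fintype.card V)
    (u v : V) :
    ∃ w, w ≠ u ∧ w ≠ v := by
  obtain ⟨a, b, c, hab, hac, hbc⟩ := Fintype.two_lt_card_iff.1 h
  by_contra! h'
  have := h' a; have := h' b; have := h' c
  grind +splitImp

theorem Fintype.exists_equiv_fin_val_lt_card_iff_mem {V : Type*} [Fintype V] (S : Set V)
    [DecidablePred (· ∈ S)] :
    ∃ e : V ≃ Fin (Fintype.card V), ∀ v, (e v : ℕ) < Fintype.card S ↔ v ∈ S := by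
  have hcard : Fintype.card S + Fintype.card ↥Sᶜ = Fintype.card V := by
    rw [← Fintype.card_sum, Fintype.card_congr (Equiv.Set.sumCompl S)]
  refine ⟨(Equiv.Set.sumCompl S).symm.trans <|
    ((Fintype.equivFin S).sumCongr (Fintype.equivFin ↥Sᶜ)).trans <|
      finSumFinEquiv.trans (finCongr hcard), fun v => ?_⟩
  by_cases hv : v ∈ S
  · simp only [Equiv.trans_apply, Equiv.Set.sumCompl_symm_apply_of_mem hv, Equiv.sumCongr_apply,
      Sum.map_inl, finSumFinEquiv_apply_left, finCongr_apply, Fin.val_cast, Fin.val_castAdd,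
      hv, Fin.is_lt]
  · simp only [Equiv.trans_apply, Equiv.Set.sumCompl_symm_apply_of_notMem hv,
      Equiv.sumCongr_apply, Sum.map_inr, finSumFinEquiv_apply_right, finCongr_apply, Fin.val_cast,
      Fin.val_natAdd, hv, iff_false]
    omega

namespace SimpleGraph

variable {V : Type*} (G : SimpleGraph V)

def cutVertices : Set V := {v | ¬(G.induce {v}ᶜ).Connected}

variable {G}

theorem Reachable.iff_of_forall_adj_iff {P : V → Prop} (hP : ∀ x y, G.Adj x y → (P x ↔ P y))
    {a b : V} (h : G.Reachable a b) : P a ↔ P b := by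
  obtain ⟨w⟩ := h
  induction w with
  | nil => rfl
  | cons hadj _ ih => exact (hP _ _ hadj).trans ih

theorem mem_cutVertices_of_separates {v a b : V} (P : V → Prop)
    (hP : ∀ x y, x ≠ v → y ≠ v → G.Adj x y → (P x ↔ P y))
    (hav : a ≠ v) (hbv : b ≠ v) (ha : P a) (hb : ¬P b) : v ∈ G.cutVertices := fun hconn =>
  hb <| ((hconn.preconnected ⟨a, hav⟩ ⟨b, hbv⟩).iff_of_forall_adj_iff
    (P := fun x : ({v}ᶜ : Set V) => P x) fun x y => hP x y x.2 y.2).1 ha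

theorem mem_cutVertices_of_isolated {v a b : V} (ha : ∀ x, ¬G.Adj a x)
    (hav : a ≠ v) (hbv : b ≠ v) (hab : a ≠ b) : v ∈ G.cutVertices :=
  mem_cutVertices_of_separates (· = a) (fun x y _ _ hxy => by grind [hxy.symm]) hav hbv rfl
    hab.symm

theorem cutVertices_comap_equiv {W : Type*} (e : V ≃ W) (H : SimpleGraph W) :
    (H.comap e).cutVertices = e ⁻¹' H.cutVertices := by
  ext v
  let iso : (H.comap e).induce {v}ᶜ ≃g H.induce {e v}ᶜ :=
    { toEquiv := e.subtypeEquiv fun _ => by simp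
      map_rel_iff' := Iff.rfl }
  exact iso.connected_iff.not

theorem cutVertices_bot [Fintype V] (h : 2 < Fintype.card V) :
    (⊥ : SimpleGraph V).cutVertices = Set.univ := by
  refine Set.eq_univ_of_forall fun v => ?_
  obtain ⟨a, hav, -⟩ := Fintype.exists_ne_ne_of_two_lt_card h v v
  obtain ⟨b, hbv, hba⟩ := Fintype.exists_ne_ne_of_two_lt_card h v a
  exact mem_cutVertices_of_isolated (fun _ => id) hav hbv hba.symm

theorem cutVertices_top_deleteIncidenceSet [Fintype V] (h : 2 < Fintype.card V) (t : V) :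
    ((⊤ : SimpleGraph V).deleteIncidenceSet t).cutVertices = {t}ᶜ := by
  ext v
  rcases eq_or_ne v t with rfl | hvt
  · obtain ⟨w, hw, -⟩ := Fintype.exists_ne_ne_of_two_lt_card h v v
    have : Nonempty ({v}ᶜ : Set V) := ⟨⟨w, hw⟩⟩
    simp [cutVertices, induce_deleteIncidenceSet_of_notMem]
  · obtain ⟨b, hbv, hbt⟩ := Fintype.exists_ne_ne_of_two_lt_card h v t
    exact iff_of_true
      (mem_cutVertices_of_isolated (fun _ h => (deleteIncidenceSet_adj.1 h).2.1 rfl) hvt.symm hbv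
        hbt.symm) hvt

/-- Edges of the path `0 – 1 – ⋯ – (k-1)`, of the leaf `k` attached to `0`, and of every later
vertex attached to `k - 1`. -/
def caterpillarRel (k a b : ℕ) : Prop :=
  b = a + 1 ∧ b < k ∨ a = 0 ∧ b = k ∨ a + 1 = k ∧ k < b

def caterpillar (n k : ℕ) : SimpleGraph (Fin n) :=
  fromRel fun i j => caterpillarRel k i j

variable {n k : ℕ}

theorem caterpillar_adj {i j : Fin n} :
    (caterpillar n k).Adj i j ↔ (i : ℕ) ≠ j ∧ (caterpillarRel k i j ∨ caterpillarRel k j i) := by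
  rw [caterpillar, fromRel_adj, Fin.val_ne_iff]

theorem caterpillar_connected (hk : 0 < k) (hn : 0 < n) : (caterpillar n k).Connected := by
  let root : Fin n := ⟨0, hn⟩
  have spine : ∀ j (hj : j < n), j < k → (caterpillar n k).Reachable root ⟨j, hj⟩ := by
    intro j
    induction j with
    | zero => exact fun _ _ => .rfl
    | succ j ih =>
      intro hj hjk
      refine (ih (by omega) (by omega)).trans (Adj.reachable ?_)
      rw [caterpillar_adj]
      dsimp only [caterpillarRel]
      omega
  refine (connected_iff_exists_forall_reachable _).2 ⟨root, fun ⟨j, hj⟩ => ?_⟩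
  rcases lt_trichotomy j k with hjk | rfl | hjk
  · exact spine j hj hjk
  · exact Adj.reachable (by rw [caterpillar_adj]; dsimp only [caterpillarRel, root]; omega)
  · refine (spine (k - 1) (by omega) (by omega)).trans (Adj.reachable ?_)
    rw [caterpillar_adj]
    dsimp only [caterpillarRel]
    omega

theorem caterpillar_existsUnique_adj (hk : 0 < k) (i : Fin n) (hi : k ≤ i) :
    ∃! j, (caterpillar n k).Adj i j := by
  have unique_of (j₀ : Fin n) (h : ∀ j : Fin n, (caterpillar n k).Adj i j ↔ (j : ℕ) = j₀) :
      ∃! j, (caterpillar n k).Adj i j :=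
    ⟨j₀, (h j₀).2 rfl, fun j hj => Fin.ext ((h j).1 hj)⟩
  rcases hi.eq_or_lt with hik | hik
  · refine unique_of ⟨0, by omega⟩ fun j => ?_
    rw [caterpillar_adj]
    dsimp only [caterpillarRel]
    omega
  · refine unique_of ⟨k - 1, by omega⟩ fun j => ?_
    rw [caterpillar_adj]
    dsimp only [caterpillarRel]
    omega

theorem caterpillar_cutVertices (hk : 0 < k) (hkn : k + 2 ≤ n) :
    (caterpillar n k).cutVertices = {i : Fin n | (i : ℕ) < k} := by
  ext d
  refine ⟨fun hd => show (d : ℕ) < k from not_le.1 fun hdk => hd ?_,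
    fun (hdk : (d : ℕ) < k) => ?_⟩
  · classical
    exact (caterpillar_connected hk (by omega)).induce_compl_singleton_of_degree_eq_one
      (degree_eq_one_iff_existsUnique_adj.2 (caterpillar_existsUnique_adj hk d hdk))
  · refine mem_cutVertices_of_separates (fun i : Fin n => (i : ℕ) < d ∨ (i : ℕ) = k)
      (a := ⟨k, by omega⟩) (b := ⟨k + 1, by omega⟩) (fun x y hx hy hxy => ?_)
      (by rw [Ne, Fin.ext_iff]; dsimp only; omega) (by rw [Ne, Fin.ext_iff]; dsimp only; omega)
      (by dsimp only; omega) (by dsimp only; omega)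
    rw [caterpillar_adj] at hxy
    dsimp only [caterpillarRel] at hxy
    rw [Ne, Fin.ext_iff] at hx hy
    omega

theorem exists_cutVertices_eq_setOf_lt (hn : 3 ≤ n) (hk : 0 < k) (hkn : k ≤ n) :
    ∃ H : SimpleGraph (Fin n), H.cutVertices = {i : Fin n | (i : ℕ) < k} := by
  rcases (by omega : k = n ∨ k + 1 = n ∨ k + 2 ≤ n) with rfl | rfl | hkn
  · exact ⟨⊥, by rw [cutVertices_bot (by simpa)]; ext i; simp⟩
  · refine ⟨(⊤ : SimpleGraph (Fin (k + 1))).deleteIncidenceSet (Fin.last k), ?_⟩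
    rw [cutVertices_top_deleteIncidenceSet (V := Fin (k + 1)) (by simp; omega)]
    ext i
    simp only [Set.mem_compl_iff, Set.mem_singleton_iff, Fin.ext_iff, Fin.val_last,
      Set.mem_ofPred_eq]
    omega
  · exact ⟨caterpillar n k, caterpillar_cutVertices hk hkn⟩

end SimpleGraph

theorem stmt_10_general {V : Type*} [Fintype V]
    (hn : 3 ≤ Fintype.card V) (S : Set V) (hS : S.Nonempty) :
    ∃ G : SimpleGraph V,
      S = {v : V | ¬ (G.induce ({v}ᶜ : Set V)).Connected} := by
  classical
  obtain ⟨e, he⟩ := Fintype.exists_equiv_fin_val_lt_card_iff_mem S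
  obtain ⟨H, hH⟩ := SimpleGraph.exists_cutVertices_eq_setOf_lt hn
    (Fintype.card_pos_iff.2 hS.to_subtype) (Fintype.card_subtype_le _)
  refine ⟨H.comap e, ?_⟩
  change S = (H.comap e).cutVertices
  ext v
  rw [SimpleGraph.cutVertices_comap_equiv, hH, Set.mem_preimage, Set.mem_ofPred_eq, he]

/-- Every nonempty subset `S` of an `n`-vertex set (`n ≥ 3`) is the set of vertices
whose deletion disconnects some graph `G` on `V`; i.e. `m(0,n) = 0`. -/
theorem stmt_10 {V : Type*} [Fintype V] [DecidableEq V]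
    (hn : 3 ≤ Fintype.card V) (S : Set V) (hS : S.Nonempty) :
    ∃ G : SimpleGraph V,
      S = {v : V | ¬ (G.induce ({v}ᶜ : Set V)).Connected} :=
  stmt_10_general hn S hS
end

section
/- Let V be a finite set with |V| = n ≥ 2, let ⋆ be an element not in V, and let 𝓕 be any family of (n−1)-element subsets of V. Then there exists a graph G on the vertex set V ∪ {⋆} such that 𝓕 = {S ⊆ V ∪ {⋆} : |S| = n−1 and the two vertices of (V ∪ {⋆})∖S are non-adjacent in G}. -/
/-- Every family `𝓕` of `(n-1)`-subsets of an `n`-vertex set `V` (`n ≥ 2`) is realized,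
after adding one extra vertex `⋆` (modelled by `none : Option V`), as the family of
`(n-1)`-subsets of `V ∪ {⋆}` whose complementary two vertices are non-adjacent;
i.e. `m(n-2,n) ≤ 1`. -/
theorem stmt_11 {V : Type*} [Fintype V] [DecidableEq V]
    (hn : 2 ≤ Fintype.card V) (𝓕 : Set (Finset V))
    (h𝓕 : ∀ F ∈ 𝓕, F.card = Fintype.card V - 1) :
    ∃ G : SimpleGraph (Option V),
      (fun F : Finset V => F.image Option.some) '' 𝓕 =
        {S : Finset (Option V) | S.card = Fintype.card V - 1 ∧
          ∀ a ∉ S, ∀ b ∉ S, a ≠ b → ¬ G.Adj a b} := by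
  classical
  set n := Fintype.card V with hncard
  refine ⟨SimpleGraph.fromRel (fun a b => match a, b with
      | some _, some _ => True
      | some v, none => Finset.univ.erase v ∉ 𝓕
      | none, some v => Finset.univ.erase v ∉ 𝓕
      | none, none => False), ?_⟩
  ext S
  simp only [Set.mem_image, Set.mem_setOf_eq]
  constructor
  · rintro ⟨F, hF, rfl⟩
    have hcard : F.card = n - 1 := h𝓕 F hF
    refine ⟨by rw [Finset.card_image_of_injective _ (Option.some_injective V), hcard], ?_⟩
    rintro (_|u) ha (_|v) hb hne hadj
    · exact hne rfl
    · -- a = none, b = some v; Adj means univ.erase v ∉ 𝓕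
      rw [SimpleGraph.fromRel_adj] at hadj
      simp only [ne_eq, or_self] at hadj
      have hv : v ∉ F := fun h => hb (Finset.mem_image_of_mem _ h)
      have hFeq : F = Finset.univ.erase v := by
        apply Finset.eq_of_subset_of_card_le
        · intro x hx
          exact Finset.mem_erase.mpr ⟨fun e => hv (e ▸ hx), Finset.mem_univ x⟩
        · simp only [Finset.card_erase_of_mem (Finset.mem_univ v), hcard, Finset.card_univ]; omega
      exact hadj.2 (hFeq ▸ hF)
    · rw [SimpleGraph.fromRel_adj] at hadj
      simp only [ne_eq, or_self] at hadj
      have hu : u ∉ F := fun h => ha (Finset.mem_image_of_mem _ h)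
      have hFeq : F = Finset.univ.erase u := by
        apply Finset.eq_of_subset_of_card_le
        · intro x hx
          exact Finset.mem_erase.mpr ⟨fun e => hu (e ▸ hx), Finset.mem_univ x⟩
        · simp only [Finset.card_erase_of_mem (Finset.mem_univ u), hcard, Finset.card_univ]; omega
      exact hadj.2 (hFeq ▸ hF)
    · -- both some: u ≠ v adjacent; but u, v both not in F means u = v... need contradiction
      have hu : u ∉ F := fun h => ha (Finset.mem_image_of_mem _ h)
      have hv : v ∉ F := fun h => hb (Finset.mem_image_of_mem _ h)
      -- Fᶜ has card n - (n-1) = 1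
      have hc : Fᶜ.card = 1 := by
        rw [Finset.card_compl, hcard]
        omega
      obtain ⟨w, hw⟩ := Finset.card_eq_one.mp hc
      have : u = w := by
        have := hw ▸ (Finset.mem_compl.mpr hu); simpa using this
      have : v = w := by
        have := hw ▸ (Finset.mem_compl.mpr hv); simpa using this
      apply hne; simp_all
  · rintro ⟨hScard, hS⟩
    -- first: none ∉ S
    have hnone : none ∉ S := by
      intro hmem
      have hsub : (Finset.univ.image Option.some : Finset (Option V)) ∩ S = S.erase none := by
        ext x; cases x <;> simp [hmem, Finset.mem_erase]
      have h1 := Finset.card_inter_add_card_sdiff (Finset.univ.image Option.some : Finset (Option V)) S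
      rw [hsub, Finset.card_erase_of_mem hmem, hScard,
        Finset.card_image_of_injective _ (Option.some_injective V), Finset.card_univ] at h1
      have hTcard : 1 < ((Finset.univ.image Option.some : Finset (Option V)) \ S).card := by omega
      obtain ⟨a, haT, b, hbT, hab⟩ := Finset.one_lt_card.mp hTcard
      obtain ⟨haI, haS⟩ := Finset.mem_sdiff.mp haT
      obtain ⟨hbI, hbS⟩ := Finset.mem_sdiff.mp hbT
      obtain ⟨u, -, rfl⟩ := Finset.mem_image.mp haI
      obtain ⟨w, -, rfl⟩ := Finset.mem_image.mp hbI
      exact hS _ haS _ hbS hab (by simp [SimpleGraph.fromRel_adj, hab])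
    -- find v with some v ∉ S
    obtain ⟨v, hv⟩ : ∃ v : V, some v ∉ S := by
      by_contra h
      push_neg at h
      have : (Finset.univ.image Option.some : Finset (Option V)) ⊆ S := by
        intro x hx
        simp only [Finset.mem_image, Finset.mem_univ, true_and] at hx
        obtain ⟨u, rfl⟩ := hx
        exact h u
      have := Finset.card_le_card this
      rw [Finset.card_image_of_injective _ (Option.some_injective V), Finset.card_univ] at this
      omega
    have hSeq : S = (Finset.univ.erase v).image some := by
      apply Finset.eq_of_subset_of_card_le
      · intro x hx
        cases x with
        | none => exact absurd hx hnone
        | some u =>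
          refine Finset.mem_image_of_mem _ (Finset.mem_erase.mpr ⟨fun e => hv (e ▸ hx), Finset.mem_univ u⟩)
      · rw [Finset.card_image_of_injective _ (Option.some_injective V),
          Finset.card_erase_of_mem (Finset.mem_univ v), Finset.card_univ, hScard]
    refine ⟨Finset.univ.erase v, ?_, hSeq.symm⟩
    by_contra hnot
    exact hS none hnone (some v) hv (by simp) (by simp [SimpleGraph.fromRel_adj, hnot])
end

section
/- Let W be a finite set, V ⊆ W, G a graph on W, and d ≥ 0 an integer. Let 𝓕 = {F ⊆ W : |F| = d+1 and W∖F is an independent set of G}. Suppose 𝓕 is nonempty, the union of all members of 𝓕 equals V, and the intersection of all members of 𝓕 is empty. Then there exists a graph H on the vertex set V such that 𝓕 = {F ⊆ V : |F| = d+1 and V∖F is an independent set of H}. -/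
/-- If the facets of a total cut complex of a graph `G` on `W` have union `V` and
empty intersection, then the complex is the total cut complex of a graph on
exactly the vertex set `V`. -/
theorem stmt_13 {W : Type*} [Fintype W] [DecidableEq W] (V : Set W)
    (G : SimpleGraph W) (d : ℕ) (𝓕 : Set (Finset W))
    (h𝓕 : 𝓕 = {F : Finset W | F.card = d + 1 ∧
      ((F : Set W)ᶜ).Pairwise (fun a b => ¬ G.Adj a b)})
    (hne : 𝓕.Nonempty)
    (hunion : (⋃ F ∈ 𝓕, (F : Set W)) = V)
    (hinter : (⋂ F ∈ 𝓕, (F : Set W)) = ∅) :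
    ∃ H : SimpleGraph V,
      𝓕 = (fun F' : Finset V => F'.map (Function.Embedding.subtype (· ∈ V))) ''
        {F' : Finset V | F'.card = d + 1 ∧
          ((F' : Set V)ᶜ).Pairwise (fun a b => ¬ H.Adj a b)} := by
  classical
  have hsub : ∀ F ∈ 𝓕, (F : Set W) ⊆ V := by
    intro F hF
    rw [← hunion]
    exact Set.subset_biUnion_of_mem hF
  -- every vertex outside V is isolated in G
  have hiso : ∀ c ∉ V, ∀ x : W, ¬ G.Adj c x := by
    intro c hc x hadj
    have hcx : c ≠ x := fun h => G.irrefl (h ▸ hadj)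
    have hxF : ∃ F ∈ 𝓕, x ∉ F := by
      by_contra h
      push_neg at h
      have hx : x ∈ (⋂ F ∈ 𝓕, (F : Set W)) := by
        simp only [Set.mem_iInter]
        intro F hF
        exact h F hF
      rw [hinter] at hx
      exact hx
    obtain ⟨F, hF, hxF⟩ := hxF
    have hcF : c ∉ F := fun h => hc (hsub F hF h)
    have hpw := (h𝓕 ▸ hF).2
    exact hpw (by simpa using hcF) (by simpa using hxF) hcx hadj
  refine ⟨SimpleGraph.comap (Function.Embedding.subtype (· ∈ V)) G, ?_⟩
  ext F
  simp only [Set.mem_image, Set.mem_setOf_eq]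
  constructor
  · intro hF
    have hFV : (F : Set W) ⊆ V := hsub F hF
    rw [h𝓕] at hF
    refine ⟨F.subtype (· ∈ V), ⟨?_, ?_⟩, ?_⟩
    · rw [Finset.card_subtype, Finset.filter_true_of_mem (fun x hx => hFV hx)]
      exact hF.1
    · intro a ha b hb hab hadj
      have ha' : (a : W) ∉ F := by
        intro h
        exact ha (by simpa [Finset.mem_subtype] using h)
      have hb' : (b : W) ∉ F := by
        intro h
        exact hb (by simpa [Finset.mem_subtype] using h)
      have hab' : (a : W) ≠ (b : W) := fun h => hab (Subtype.coe_injective h)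
      exact hF.2 (by simpa using ha') (by simpa using hb') hab' hadj
    · rw [Finset.subtype_map, Finset.filter_true_of_mem (fun x hx => hFV hx)]
  · rintro ⟨F', ⟨hcard, hpw⟩, rfl⟩
    rw [h𝓕]
    refine ⟨by simp [hcard], ?_⟩
    intro a ha b hb hab hadj
    by_cases haV : a ∈ V
    · by_cases hbV : b ∈ V
      · have ha' : (⟨a, haV⟩ : V) ∉ F' := by
          intro h
          refine ha ?_
          simp only [Finset.coe_map, Set.mem_image]
          exact ⟨⟨a, haV⟩, h, rfl⟩
        have hb' : (⟨b, hbV⟩ : V) ∉ F' := by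
          intro h
          refine hb ?_
          simp only [Finset.coe_map, Set.mem_image]
          exact ⟨⟨b, hbV⟩, h, rfl⟩
        have hab' : (⟨a, haV⟩ : V) ≠ ⟨b, hbV⟩ := fun h => hab (congrArg Subtype.val h)
        exact hpw (by simpa using ha') (by simpa using hb') hab' hadj
      · exact hiso b hbV a hadj.symm
    · exact hiso a haV b hadj
end

section
/- Let G be a graph on a finite vertex set V that belongs to the family 𝒫₄, with witnesses x, y, z, w and V' (so x, y, z, w are distinct, N(x) = V'∪{y}, N(y) = V'∪{x,z}, N(z) = V'∪{y,w}, N(w) = V'∪{z}). Let G' be the graph obtained from G by deleting the edges xy and zw and adding the edges xz and yw. Then G' ≠ G, and every 3-element subset of V induces a disconnected subgraph in G' exactly when it induces a disconnected subgraph in G (i.e. Δ₃(G') = Δ₃(G)). -/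
lemma aux_not_conn {V : Type*} (H : SimpleGraph V) (s : Set V) (u v : V)
    (hu : u ∈ s) (hv : v ∈ s) (huv : u ≠ v)
    (hiso : ∀ t ∈ s, ¬ H.Adj u t) : ¬ (H.induce s).Connected := by
  intro hc
  obtain ⟨p⟩ := hc.preconnected ⟨u, hu⟩ ⟨v, hv⟩
  cases p with
  | nil => exact huv rfl
  | cons h q =>
      rename_i b'
      exact hiso b'.1 b'.2 (by simpa using h)

lemma aux_conn {V : Type*} (H : SimpleGraph V) (p q r : V)
    (h1 : H.Adj p q) (h2 : H.Adj p r) :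
    (H.induce {p, q, r}).Connected := by
  rw [SimpleGraph.connected_iff]
  have hp : p ∈ ({p, q, r} : Set V) := by simp
  have key : ∀ u : ({p, q, r} : Set V), (H.induce {p, q, r}).Reachable u ⟨p, hp⟩ := by
    rintro ⟨u, hu⟩
    rcases hu with rfl | rfl | rfl
    · rfl
    · exact SimpleGraph.Adj.reachable (by simpa using h1.symm)
    · exact SimpleGraph.Adj.reachable (by simpa using h2.symm)
  exact ⟨fun a b => (key a).trans (key b).symm, ⟨⟨p, hp⟩⟩⟩

lemma aux_three_conn {V : Type*} (H : SimpleGraph V) (a b c : V)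
    (hab : a ≠ b) (hac : a ≠ c) (hbc : b ≠ c) :
    (H.induce {a, b, c}).Connected ↔
      (H.Adj a b ∧ H.Adj a c) ∨ (H.Adj a b ∧ H.Adj b c) ∨ (H.Adj a c ∧ H.Adj b c) := by
  constructor
  · intro hc
    by_contra hno
    push_neg at hno
    obtain ⟨h1, h2, h3⟩ := hno
    by_cases hab' : H.Adj a b
    · refine aux_not_conn H {a, b, c} c a (by simp) (by simp) hac.symm ?_ hc
      intro t ht hadj
      rcases ht with rfl | rfl | rfl
      · exact h1 hab' hadj.symm
      · exact h2 hab' hadj.symm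
      · exact H.irrefl hadj
    · by_cases hac' : H.Adj a c
      · refine aux_not_conn H {a, b, c} b a (by simp) (by simp) hab.symm ?_ hc
        intro t ht hadj
        rcases ht with rfl | rfl | rfl
        · exact hab' hadj.symm
        · exact H.irrefl hadj
        · exact h3 hac' hadj
      · refine aux_not_conn H {a, b, c} a b (by simp) (by simp) hab ?_ hc
        intro t ht hadj
        rcases ht with rfl | rfl | rfl
        · exact H.irrefl hadj
        · exact hab' hadj
        · exact hac' hadj
  · rintro (⟨h1, h2⟩ | ⟨h1, h2⟩ | ⟨h1, h2⟩)
    · exact aux_conn H a b c h1 h2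
    · have hset : ({b, a, c} : Set V) = {a, b, c} := by ext t; simp; tauto
      exact hset ▸ aux_conn H b a c h1.symm h2
    · have hset : ({c, a, b} : Set V) = {a, b, c} := by ext t; simp; tauto
      exact hset ▸ aux_conn H c a b h1.symm h2.symm

/-- both graphs have the 𝒫₄-type structure; a,b special ⇒ same connectivity on {a,b,c}. -/
lemma aux_key {V : Type*} (G G' : SimpleGraph V) (x y z w : V) (V' : Set V)
    (hxy : x ≠ y) (hxz : x ≠ z) (hxw : x ≠ w) (hyz : y ≠ z) (hyw : y ≠ w) (hzw : z ≠ w)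
    (hxV : x ∉ V') (hyV : y ∉ V') (hzV : z ∉ V') (hwV : w ∉ V')
    (gx : ∀ v, G.Adj x v ↔ v ∈ V' ∨ v = y)
    (gy : ∀ v, G.Adj y v ↔ v ∈ V' ∨ v = x ∨ v = z)
    (gz : ∀ v, G.Adj z v ↔ v ∈ V' ∨ v = y ∨ v = w)
    (gw : ∀ v, G.Adj w v ↔ v ∈ V' ∨ v = z)
    (g'x : ∀ v, G'.Adj x v ↔ v ∈ V' ∨ v = z)
    (g'y : ∀ v, G'.Adj y v ↔ v ∈ V' ∨ v = z ∨ v = w)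
    (g'z : ∀ v, G'.Adj z v ↔ v ∈ V' ∨ v = x ∨ v = y)
    (g'w : ∀ v, G'.Adj w v ↔ v ∈ V' ∨ v = y)
    (a b c : V) (hab : a ≠ b) (hac : a ≠ c) (hbc : b ≠ c)
    (ha : a = x ∨ a = y ∨ a = z ∨ a = w) (hb : b = x ∨ b = y ∨ b = z ∨ b = w) :
    ((G'.induce {a, b, c}).Connected ↔ (G.induce {a, b, c}).Connected) := by
  by_cases hcs : c = x ∨ c = y ∨ c = z ∨ c = w
  · -- all three special
    have hxy' := hxy.symm; have hxz' := hxz.symm; have hxw' := hxw.symm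
    have hyz' := hyz.symm; have hyw' := hyw.symm; have hzw' := hzw.symm
    rw [aux_three_conn G' a b c hab hac hbc, aux_three_conn G a b c hab hac hbc]
    rcases ha with rfl | rfl | rfl | rfl <;> rcases hb with rfl | rfl | rfl | rfl <;>
      rcases hcs with rfl | rfl | rfl | rfl <;>
        first
          | exact absurd rfl hab
          | exact absurd rfl hac
          | exact absurd rfl hbc
          | simp [g'x, g'y, g'z, g'w, gx, gy, gz, gw, hxy, hxz, hxw, hyz, hyw, hzw,
          hxy', hxz', hxw', hyz', hyw', hzw', hxV, hyV, hzV, hwV]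
  · -- c not special
    have hadjG : ∀ d, (d = x ∨ d = y ∨ d = z ∨ d = w) → (G.Adj d c ↔ c ∈ V') := by
      intro d hd
      constructor
      · intro h
        rcases hd with rfl | rfl | rfl | rfl
        · rcases (gx c).1 h with h' | h'
          · exact h'
          · exact absurd (Or.inr (Or.inl h')) hcs
        · rcases (gy c).1 h with h' | h' | h'
          · exact h'
          · exact absurd (Or.inl h') hcs
          · exact absurd (Or.inr (Or.inr (Or.inl h'))) hcs
        · rcases (gz c).1 h with h' | h' | h'
          · exact h'
          · exact absurd (Or.inr (Or.inl h')) hcs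
          · exact absurd (Or.inr (Or.inr (Or.inr h'))) hcs
        · rcases (gw c).1 h with h' | h'
          · exact h'
          · exact absurd (Or.inr (Or.inr (Or.inl h'))) hcs
      · intro h
        rcases hd with rfl | rfl | rfl | rfl
        exacts [(gx c).2 (Or.inl h), (gy c).2 (Or.inl h), (gz c).2 (Or.inl h),
          (gw c).2 (Or.inl h)]
    have hadjG' : ∀ d, (d = x ∨ d = y ∨ d = z ∨ d = w) → (G'.Adj d c ↔ c ∈ V') := by
      intro d hd
      constructor
      · intro h
        rcases hd with rfl | rfl | rfl | rfl
        · rcases (g'x c).1 h with h' | h'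
          · exact h'
          · exact absurd (Or.inr (Or.inr (Or.inl h'))) hcs
        · rcases (g'y c).1 h with h' | h' | h'
          · exact h'
          · exact absurd (Or.inr (Or.inr (Or.inl h'))) hcs
          · exact absurd (Or.inr (Or.inr (Or.inr h'))) hcs
        · rcases (g'z c).1 h with h' | h' | h'
          · exact h'
          · exact absurd (Or.inl h') hcs
          · exact absurd (Or.inr (Or.inl h')) hcs
        · rcases (g'w c).1 h with h' | h'
          · exact h'
          · exact absurd (Or.inr (Or.inl h')) hcs
      · intro h
        rcases hd with rfl | rfl | rfl | rfl
        exacts [(g'x c).2 (Or.inl h), (g'y c).2 (Or.inl h), (g'z c).2 (Or.inl h),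
          (g'w c).2 (Or.inl h)]
    have hset : ({c, a, b} : Set V) = {a, b, c} := by
      ext t
      simp only [Set.mem_insert_iff, Set.mem_singleton_iff]
      constructor
      · rintro (rfl | rfl | rfl) <;> simp
      · rintro (rfl | rfl | rfl) <;> simp
    by_cases hcV : c ∈ V'
    · have h1 : G.Adj a c := (hadjG a ha).2 hcV
      have h2 : G.Adj b c := (hadjG b hb).2 hcV
      have h1' : G'.Adj a c := (hadjG' a ha).2 hcV
      have h2' : G'.Adj b c := (hadjG' b hb).2 hcV
      have c1 := aux_conn G' c a b h1'.symm h2'.symm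
      have c2 := aux_conn G c a b h1.symm h2.symm
      rw [hset] at c1 c2
      exact iff_of_true c1 c2
    · have hisoG : ∀ t ∈ ({a, b, c} : Set V), ¬ G.Adj c t := by
        intro t ht hadj
        rcases ht with rfl | rfl | rfl
        · exact hcV ((hadjG _ ha).1 hadj.symm)
        · exact hcV ((hadjG _ hb).1 hadj.symm)
        · exact G.irrefl hadj
      have hisoG' : ∀ t ∈ ({a, b, c} : Set V), ¬ G'.Adj c t := by
        intro t ht hadj
        rcases ht with rfl | rfl | rfl
        · exact hcV ((hadjG' _ ha).1 hadj.symm)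
        · exact hcV ((hadjG' _ hb).1 hadj.symm)
        · exact G'.irrefl hadj
      exact iff_of_false
        (aux_not_conn G' {a, b, c} c a (by simp) (by simp) hac.symm hisoG')
        (aux_not_conn G {a, b, c} c a (by simp) (by simp) hac.symm hisoG)

lemma aux_same {V : Type*} (G G' : SimpleGraph V) (s : Set V)
    (h : ∀ u v, u ∈ s → v ∈ s → (G'.Adj u v ↔ G.Adj u v)) :
    ((G'.induce s).Connected ↔ (G.induce s).Connected) := by
  have : G'.induce s = G.induce s := by
    ext ⟨u, hu⟩ ⟨v, hv⟩
    simpa using h u v hu hv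
  rw [this]


lemma aux_gprime_adj {V : Type*} (G : SimpleGraph V) (x y z w : V)
    (hxy : x ≠ y) (hxz : x ≠ z) (hxw : x ≠ w) (hyz : y ≠ z) (hyw : y ≠ w) (hzw : z ≠ w)
    (u v : V) :
    (SimpleGraph.fromEdgeSet
      ((G.edgeSet \ {s(x, y), s(z, w)}) ∪ {s(x, z), s(y, w)})).Adj u v ↔
      ((G.Adj u v ∧ ¬(s(u, v) = s(x, y)) ∧ ¬(s(u, v) = s(z, w)))
        ∨ s(u, v) = s(x, z) ∨ s(u, v) = s(y, w)) := by
  rw [SimpleGraph.fromEdgeSet_adj]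
  simp only [Set.mem_union, Set.mem_diff, Set.mem_insert_iff, Set.mem_singleton_iff,
    SimpleGraph.mem_edgeSet]
  constructor
  · rintro ⟨h, hne⟩; tauto
  · rintro (⟨h, h1, h2⟩ | h | h)
    · exact ⟨Or.inl ⟨h, by tauto⟩, h.ne⟩
    · refine ⟨Or.inr (Or.inl h), ?_⟩
      rw [Sym2.eq_iff] at h
      rintro rfl
      rcases h with ⟨rfl, rfl⟩ | ⟨rfl, rfl⟩ <;> exact hxz rfl
    · refine ⟨Or.inr (Or.inr h), ?_⟩
      rw [Sym2.eq_iff] at h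
      rintro rfl
      rcases h with ⟨rfl, rfl⟩ | ⟨rfl, rfl⟩ <;> exact hyw rfl

lemma aux_gprime_nbrs {V : Type*} (G G' : SimpleGraph V) (x y z w : V) (V' : Set V)
    (hxy : x ≠ y) (hxz : x ≠ z) (hxw : x ≠ w) (hyz : y ≠ z) (hyw : y ≠ w) (hzw : z ≠ w)
    (hxV : x ∉ V') (hyV : y ∉ V') (hzV : z ∉ V') (hwV : w ∉ V')
    (gx : ∀ v, G.Adj x v ↔ v ∈ V' ∨ v = y)
    (gy : ∀ v, G.Adj y v ↔ v ∈ V' ∨ v = x ∨ v = z)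
    (gz : ∀ v, G.Adj z v ↔ v ∈ V' ∨ v = y ∨ v = w)
    (gw : ∀ v, G.Adj w v ↔ v ∈ V' ∨ v = z)
    (hG' : G' = SimpleGraph.fromEdgeSet
      ((G.edgeSet \ {s(x, y), s(z, w)}) ∪ {s(x, z), s(y, w)})) :
    (∀ v, G'.Adj x v ↔ v ∈ V' ∨ v = z) ∧
    (∀ v, G'.Adj y v ↔ v ∈ V' ∨ v = z ∨ v = w) ∧
    (∀ v, G'.Adj z v ↔ v ∈ V' ∨ v = x ∨ v = y) ∧
    (∀ v, G'.Adj w v ↔ v ∈ V' ∨ v = y) := by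
  subst hG'
  have hxy' := hxy.symm; have hxz' := hxz.symm; have hxw' := hxw.symm
  have hyz' := hyz.symm; have hyw' := hyw.symm; have hzw' := hzw.symm
  refine ⟨fun v => ?_, fun v => ?_, fun v => ?_, fun v => ?_⟩ <;>
    rw [aux_gprime_adj G x y z w hxy hxz hxw hyz hyw hzw] <;>
    [rw [gx]; rw [gy]; rw [gz]; rw [gw]] <;>
  · have e1 : v ∈ V' → ¬ v = y := fun h hc => hyV (hc ▸ h)
    have e2 : v ∈ V' → ¬ v = x := fun h hc => hxV (hc ▸ h)
    have e3 : v ∈ V' → ¬ v = z := fun h hc => hzV (hc ▸ h)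
    have e4 : v ∈ V' → ¬ v = w := fun h hc => hwV (hc ▸ h)
    have f1 : v = x → ¬ v = y := fun h hc => hxy (h.symm.trans hc)
    have f2 : v = x → ¬ v = z := fun h hc => hxz (h.symm.trans hc)
    have f3 : v = x → ¬ v = w := fun h hc => hxw (h.symm.trans hc)
    have f4 : v = y → ¬ v = x := fun h hc => hxy' (h.symm.trans hc)
    have f5 : v = y → ¬ v = z := fun h hc => hyz (h.symm.trans hc)
    have f6 : v = y → ¬ v = w := fun h hc => hyw (h.symm.trans hc)
    have f7 : v = z → ¬ v = x := fun h hc => hxz' (h.symm.trans hc)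
    have f8 : v = z → ¬ v = y := fun h hc => hyz' (h.symm.trans hc)
    have f9 : v = z → ¬ v = w := fun h hc => hzw (h.symm.trans hc)
    have f10 : v = w → ¬ v = x := fun h hc => hxw' (h.symm.trans hc)
    have f11 : v = w → ¬ v = y := fun h hc => hyw' (h.symm.trans hc)
    have f12 : v = w → ¬ v = z := fun h hc => hzw' (h.symm.trans hc)
    have e5 : v = x → ¬ v ∈ V' := fun h hc => hxV (h ▸ hc)
    have e6 : v = y → ¬ v ∈ V' := fun h hc => hyV (h ▸ hc)
    have e7 : v = z → ¬ v ∈ V' := fun h hc => hzV (h ▸ hc)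
    have e8 : v = w → ¬ v ∈ V' := fun h hc => hwV (h ▸ hc)
    simp only [Sym2.eq_iff]
    simp [hxy, hxz, hxw, hyz, hyw, hzw, hxy', hxz', hxw', hyz', hyw', hzw']
    all_goals itauto


/-- For `G ∈ 𝒫₄` with witnesses `x,y,z,w,V'`, swapping the edges `xy, zw` for
`xz, yw` gives a different graph with the same 3-cut complex. -/
theorem stmt_17 {V : Type*} [Fintype V] [DecidableEq V] (G : SimpleGraph V)
    (x y z w : V) (V' : Set V)
    (hxy : x ≠ y) (hxz : x ≠ z) (hxw : x ≠ w) (hyz : y ≠ z) (hyw : y ≠ w) (hzw : z ≠ w)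
    (hV' : V' ⊆ ({x, y, z, w} : Set V)ᶜ)
    (hNx : G.neighborSet x = V' ∪ {y}) (hNy : G.neighborSet y = V' ∪ {x, z})
    (hNz : G.neighborSet z = V' ∪ {y, w}) (hNw : G.neighborSet w = V' ∪ {z})
    (G' : SimpleGraph V)
    (hG' : G' = SimpleGraph.fromEdgeSet
      ((G.edgeSet \ {s(x, y), s(z, w)}) ∪ {s(x, z), s(y, w)})) :
    G' ≠ G ∧
      ∀ T : Finset V, T.card = 3 →
        (¬ (G'.induce (T : Set V)).Connected ↔ ¬ (G.induce (T : Set V)).Connected) := by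
  have gx : ∀ v, G.Adj x v ↔ v ∈ V' ∨ v = y := fun v => by
    rw [← SimpleGraph.mem_neighborSet, hNx]
    simp only [Set.mem_union, Set.mem_singleton_iff]
  have gy : ∀ v, G.Adj y v ↔ v ∈ V' ∨ v = x ∨ v = z := fun v => by
    rw [← SimpleGraph.mem_neighborSet, hNy]
    simp only [Set.mem_union, Set.mem_insert_iff, Set.mem_singleton_iff]
  have gz : ∀ v, G.Adj z v ↔ v ∈ V' ∨ v = y ∨ v = w := fun v => by
    rw [← SimpleGraph.mem_neighborSet, hNz]
    simp only [Set.mem_union, Set.mem_insert_iff, Set.mem_singleton_iff]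
  have gw : ∀ v, G.Adj w v ↔ v ∈ V' ∨ v = z := fun v => by
    rw [← SimpleGraph.mem_neighborSet, hNw]
    simp only [Set.mem_union, Set.mem_singleton_iff]
  have hS : ∀ v ∈ V', ¬(v = x ∨ v = y ∨ v = z ∨ v = w) := by
    intro v hv
    have := hV' hv
    simpa using this
  have hxV : x ∉ V' := fun h => hS x h (Or.inl rfl)
  have hyV : y ∉ V' := fun h => hS y h (Or.inr (Or.inl rfl))
  have hzV : z ∉ V' := fun h => hS z h (Or.inr (Or.inr (Or.inl rfl)))
  have hwV : w ∉ V' := fun h => hS w h (Or.inr (Or.inr (Or.inr rfl)))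
  obtain ⟨g'x, g'y, g'z, g'w⟩ := aux_gprime_nbrs G G' x y z w V'
    hxy hxz hxw hyz hyw hzw hxV hyV hzV hwV gx gy gz gw hG'
  have nochange : ∀ u v : V, ¬(u = x ∨ u = y ∨ u = z ∨ u = w) →
      (G'.Adj u v ↔ G.Adj u v) := by
    intro u v hu
    push_neg at hu
    obtain ⟨hu1, hu2, hu3, hu4⟩ := hu
    rw [hG', aux_gprime_adj G x y z w hxy hxz hxw hyz hyw hzw]
    simp only [Sym2.eq_iff]
    constructor
    · rintro (⟨h, -, -⟩ | (⟨rfl, rfl⟩ | ⟨rfl, rfl⟩) | (⟨rfl, rfl⟩ | ⟨rfl, rfl⟩))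
      · exact h
      · exact absurd rfl hu1
      · exact absurd rfl hu3
      · exact absurd rfl hu2
      · exact absurd rfl hu4
    · intro h
      refine Or.inl ⟨h, ?_, ?_⟩
      · rintro (⟨rfl, rfl⟩ | ⟨rfl, rfl⟩)
        · exact hu1 rfl
        · exact hu2 rfl
      · rintro (⟨rfl, rfl⟩ | ⟨rfl, rfl⟩)
        · exact hu3 rfl
        · exact hu4 rfl
  have nochange2 : ∀ u v : V, ¬(v = x ∨ v = y ∨ v = z ∨ v = w) →
      (G'.Adj u v ↔ G.Adj u v) := by
    intro u v h
    rw [G'.adj_comm, G.adj_comm]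
    exact nochange v u h
  constructor
  · intro h
    have h1 : G'.Adj x z := (g'x z).2 (Or.inr rfl)
    rw [h, gx] at h1
    rcases h1 with h1 | h1
    · exact hzV h1
    · exact hyz h1.symm
  · intro T hT
    obtain ⟨a, b, c, hab, hac, hbc, rfl⟩ := Finset.card_eq_three.mp hT
    have hco : ((({a, b, c} : Finset V) : Set V)) = ({a, b, c} : Set V) := by simp
    rw [hco, not_iff_not]
    by_cases ha : a = x ∨ a = y ∨ a = z ∨ a = w
    · by_cases hb : b = x ∨ b = y ∨ b = z ∨ b = w
      · exact aux_key G G' x y z w V' hxy hxz hxw hyz hyw hzw hxV hyV hzV hwV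
          gx gy gz gw g'x g'y g'z g'w a b c hab hac hbc ha hb
      · by_cases hc : c = x ∨ c = y ∨ c = z ∨ c = w
        · have hkey := aux_key G G' x y z w V' hxy hxz hxw hyz hyw hzw hxV hyV hzV hwV
            gx gy gz gw g'x g'y g'z g'w a c b hac hab hbc.symm ha hc
          have hset : ({a, c, b} : Set V) = {a, b, c} := by
            ext t
            simp only [Set.mem_insert_iff, Set.mem_singleton_iff]
            constructor
            · rintro (rfl | rfl | rfl) <;> simp
            · rintro (rfl | rfl | rfl) <;> simp
          rwa [hset] at hkey
        · refine aux_same G G' {a, b, c} ?_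
          intro u v hu hv
          rcases hu with rfl | rfl | rfl
          · rcases hv with rfl | rfl | rfl
            · exact iff_of_false (G'.irrefl) (G.irrefl)
            · exact nochange2 _ _ hb
            · exact nochange2 _ _ hc
          · exact nochange _ v hb
          · exact nochange _ v hc
    · by_cases hb : b = x ∨ b = y ∨ b = z ∨ b = w
      · by_cases hc : c = x ∨ c = y ∨ c = z ∨ c = w
        · have hkey := aux_key G G' x y z w V' hxy hxz hxw hyz hyw hzw hxV hyV hzV hwV
            gx gy gz gw g'x g'y g'z g'w b c a hbc hab.symm hac.symm hb hc
          have hset : ({b, c, a} : Set V) = {a, b, c} := by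
            ext t
            simp only [Set.mem_insert_iff, Set.mem_singleton_iff]
            constructor
            · rintro (rfl | rfl | rfl) <;> simp
            · rintro (rfl | rfl | rfl) <;> simp
          rwa [hset] at hkey
        · refine aux_same G G' {a, b, c} ?_
          intro u v hu hv
          rcases hu with rfl | rfl | rfl
          · exact nochange _ v ha
          · rcases hv with rfl | rfl | rfl
            · exact nochange2 _ _ ha
            · exact iff_of_false (G'.irrefl) (G.irrefl)
            · exact nochange2 _ _ hc
          · exact nochange _ v hc
      · by_cases hc : c = x ∨ c = y ∨ c = z ∨ c = w
        · refine aux_same G G' {a, b, c} ?_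
          intro u v hu hv
          rcases hu with rfl | rfl | rfl
          · exact nochange _ v ha
          · exact nochange _ v hb
          · rcases hv with rfl | rfl | rfl
            · exact nochange2 _ _ ha
            · exact nochange2 _ _ hb
            · exact iff_of_false (G'.irrefl) (G.irrefl)
        · refine aux_same G G' {a, b, c} ?_
          intro u v hu hv
          rcases hu with rfl | rfl | rfl
          · exact nochange _ v ha
          · exact nochange _ v hb
          · exact nochange _ v hc
end

section
/- Let G be a graph on a finite vertex set V with |V| = n ≥ 3, and let u, v be a dominating pair of G. Let G' be the graph obtained from G by toggling the adjacency of u and v (deleting the edge uv if it is present, adding it otherwise). Then every 3-element subset of V is an independent set in G' exactly when it is an independent set in G (i.e. Δ₃ᵗ(G') = Δ₃ᵗ(G)). -/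
lemma adj_toggle {V : Type*} (G : SimpleGraph V) (u v a b : V)
    (hne : s(a, b) ≠ s(u, v)) :
    (SimpleGraph.fromEdgeSet (symmDiff G.edgeSet {s(u, v)})).Adj a b ↔ G.Adj a b := by
  simp only [SimpleGraph.fromEdgeSet_adj, symmDiff_def, Set.mem_union, Set.mem_diff,
    Set.mem_singleton_iff, SimpleGraph.mem_edgeSet]
  constructor
  · rintro ⟨h | h, _⟩
    · exact h.1
    · exact absurd h.1 hne
  · intro h
    exact ⟨Or.inl ⟨h, hne⟩, h.ne⟩

/-- Toggling the adjacency of a dominating pair does not change the total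
3-cut complex. -/
theorem stmt_18 {V : Type*} [Fintype V] [DecidableEq V] (G : SimpleGraph V)
    (hn : 3 ≤ Fintype.card V) (u v : V) (huv : u ≠ v)
    (hdom : ∀ x : V, x ≠ u → x ≠ v → (G.Adj u x ∨ G.Adj v x))
    (G' : SimpleGraph V)
    (hG' : G' = SimpleGraph.fromEdgeSet (symmDiff G.edgeSet {s(u, v)})) :
    ∀ T : Finset V, T.card = 3 →
      ((T : Set V).Pairwise (fun a b => ¬ G'.Adj a b) ↔
        (T : Set V).Pairwise (fun a b => ¬ G.Adj a b)) := by
  subst hG'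
  intro T hT
  by_cases hboth : u ∈ T ∧ v ∈ T
  · obtain ⟨hu, hv⟩ := hboth
    obtain ⟨x, hxT, hx⟩ : ∃ x ∈ T, x ∉ ({u, v} : Finset V) := by
      have hsub : ({u, v} : Finset V) ⊆ T := by
        intro y hy
        simp only [Finset.mem_insert, Finset.mem_singleton] at hy
        rcases hy with rfl | rfl <;> assumption
      have hcard : ({u, v} : Finset V).card < T.card := by
        have h2 : ({u, v} : Finset V).card ≤ 2 :=
          (Finset.card_insert_le _ _).trans (by simp)
        omega
      have hss : ({u, v} : Finset V) ⊂ T :=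
        hsub.ssubset_of_ne (fun h => by rw [h] at hcard; omega)
      exact Finset.exists_of_ssubset hss
    simp only [Finset.mem_insert, Finset.mem_singleton, not_or] at hx
    obtain ⟨hxu, hxv⟩ := hx
    have hne1 : s(u, x) ≠ s(u, v) := by
      intro h
      rcases Sym2.eq_iff.mp h with ⟨_, h2⟩ | ⟨h1, _⟩
      · exact hxv h2
      · exact huv h1
    have hne2 : s(v, x) ≠ s(u, v) := by
      intro h
      rcases Sym2.eq_iff.mp h with ⟨h1, _⟩ | ⟨_, h2⟩
      · exact huv h1.symm
      · exact hxu h2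
    have hd := hdom x hxu hxv
    constructor <;> intro h <;> exfalso
    · rcases hd with hA | hA
      · exact h (by simpa using hu) (by simpa using hxT) (Ne.symm hxu)
          ((adj_toggle G u v u x hne1).mpr hA)
      · exact h (by simpa using hv) (by simpa using hxT) (Ne.symm hxv)
          ((adj_toggle G u v v x hne2).mpr hA)
    · rcases hd with hA | hA
      · exact h (by simpa using hu) (by simpa using hxT) (Ne.symm hxu) hA
      · exact h (by simpa using hv) (by simpa using hxT) (Ne.symm hxv) hA
  · rw [not_and_or] at hboth
    have key : ∀ a ∈ T, ∀ b ∈ T, s(a, b) ≠ s(u, v) := by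
      intro a ha b hb h
      rcases Sym2.eq_iff.mp h with ⟨h1, h2⟩ | ⟨h1, h2⟩ <;>
        rcases hboth with hm | hm <;> subst h1 <;> subst h2 <;> exact hm (by assumption)
    constructor <;> intro h a ha b hb hab <;>
      have hk := key a (by simpa using ha) b (by simpa using hb) <;>
      have := h ha hb hab
    · exact fun hA => this ((adj_toggle G u v a b hk).mpr hA)
    · exact fun hA => this ((adj_toggle G u v a b hk).mp hA)
end
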